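/- arXiv:cond-mat/0102328 — 4 statements merged into one kernel-verified Lean document; each statement's English description precedes it below -/
import Mathlib

section
/- Let μ₁, μ₂, ν₁, ν₂ be finite Borel measures on ℝ with compact support and let ε₁, ε₂ ≥ 0. Assume that for every function f : ℝ → ℝ with Lipschitz constant at most 1 one has ∫ f dμ₁ − ∫ f dμ₂ ≤ ε₁ and ∫ f dν₁ − ∫ f dν₂ ≤ ε₂. Then for every function f : ℝ → ℝ with Lipschitz constant at most 1 one has ∫ f d(μ₁ ∗ ν₁) − ∫ f d(μ₂ ∗ ν₂) ≤ ν₁(ℝ)·ε₁ + μ₂(ℝ)·ε₂. (This is the quantitative form of the continuity of the convolution with respect to the Hutchinson metric, Lemma 1.) -/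
/-! Convolving with a fixed finite measure `ν` turns `∫ f d(ν ∗ μ)` into `∫ x, ∫ y, f (x + y) dμ dν`,
and every translate `y ↦ f (x + y)` of a `1`-Lipschitz `f` is again `1`-Lipschitz; so a bound `ε` on
`∫ f dμ₁ - ∫ f dμ₂` integrates to the bound `ν(univ) ε` after convolving with `ν`. Passing from
`μ₁ ∗ ν₁` to `μ₂ ∗ ν₁` and then to `μ₂ ∗ ν₂` gives the two terms of the estimate. Compact supports
are what make the Lipschitz (continuous, possibly unbounded) test functions integrable against
the convolutions. -/

open MeasureTheory Topology Filter

/-- Convolution of two Borel measures on ℝ: pushforward of the product measure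
under the addition map. -/
noncomputable def mconv (μ ν : Measure ℝ) : Measure ℝ :=
  (μ.prod ν).map (fun p : ℝ × ℝ => p.1 + p.2)

/-- Topological support of a Borel measure on ℝ: the (closed) set of points all of
whose neighbourhoods have positive measure. -/
def msupp (μ : Measure ℝ) : Set ℝ := {x : ℝ | ∀ ε > 0, 0 < μ (Metric.ball x ε)}

open Pointwise

lemma mconv_eq_conv (μ ν : Measure ℝ) : mconv μ ν = μ ∗ ν := rfl

lemma msupp_eq_support (μ : Measure ℝ) : msupp μ = μ.support := by
  ext x
  exact Metric.nhds_basis_ball.mem_measureSupport.symm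

theorem Continuous.integrable_of_ae_mem_isCompact {X E : Type*} [TopologicalSpace X] [T2Space X]
    [MeasurableSpace X] [OpensMeasurableSpace X] [NormedAddCommGroup E] {μ : Measure X}
    [IsFiniteMeasure μ] {K : Set X} (hK : IsCompact K) (hμK : ∀ᵐ x ∂μ, x ∈ K) {f : X → E}
    (hf : Continuous f) : Integrable f μ := by
  simpa [IntegrableOn, Measure.restrict_eq_self_of_ae_mem hμK] using
    hf.continuousOn.integrableOn_compact (μ := μ) hK

theorem MeasureTheory.Integrable.integral_comp_add_conv {M : Type*} [MeasurableSpace M]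
    [AddMonoid M] [MeasurableAdd₂ M] {μ ν : Measure M} [SFinite ν] {f : M → ℝ}
    (hf : Integrable f (μ ∗ ν)) : Integrable (fun x ↦ ∫ y, f (x + y) ∂ν) μ :=
  ((integrable_map_measure hf.1 (by fun_prop)).1 hf).integral_prod_left

section CompactSupport

variable {M : Type*} [AddMonoid M] [TopologicalSpace M] [ContinuousAdd M] [T2Space M]
  [SecondCountableTopology M] [MeasurableSpace M] [BorelSpace M] {μ ν : Measure M}

theorem ae_mem_support_add_support_conv [SFinite ν] (hμ : IsCompact μ.support)
    (hν : IsCompact ν.support) : ∀ᵐ z ∂(μ ∗ ν), z ∈ μ.support + ν.support := by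
  refine (ae_map_iff (by fun_prop) (hμ.add hν).isClosed.measurableSet).2 ?_
  have hprod : ∀ᵐ p ∂(μ.prod ν), p ∈ μ.support ×ˢ ν.support :=
    Measure.measure_prod_compl_eq_zero Measure.measure_compl_support
      Measure.measure_compl_support
  filter_upwards [hprod] with p hp using Set.add_mem_add hp.1 hp.2

theorem Continuous.integrable_conv [IsFiniteMeasure μ] [IsFiniteMeasure ν]
    (hμ : IsCompact μ.support) (hν : IsCompact ν.support) {E : Type*} [NormedAddCommGroup E]
    {f : M → E} (hf : Continuous f) : Integrable f (μ ∗ ν) :=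
  hf.integrable_of_ae_mem_isCompact (hμ.add hν) (ae_mem_support_add_support_conv hμ hν)

end CompactSupport

theorem integral_conv_sub_integral_conv_le {M : Type*} [NormedAddCommGroup M]
    [SecondCountableTopology M] [MeasurableSpace M] [BorelSpace M] {ν μ₁ μ₂ : Measure M}
    [IsFiniteMeasure ν] [IsFiniteMeasure μ₁] [IsFiniteMeasure μ₂] (hν : IsCompact ν.support)
    (hμ₁ : IsCompact μ₁.support) (hμ₂ : IsCompact μ₂.support) {ε : ℝ}
    (hμ : ∀ f : M → ℝ, LipschitzWith 1 f → ∫ x, f x ∂μ₁ - ∫ x, f x ∂μ₂ ≤ ε)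
    {f : M → ℝ} (hf : LipschitzWith 1 f) :
    ∫ z, f z ∂(ν ∗ μ₁) - ∫ z, f z ∂(ν ∗ μ₂) ≤ ν.real Set.univ * ε := by
  have h₁ := hf.continuous.integrable_conv hν hμ₁
  have h₂ := hf.continuous.integrable_conv hν hμ₂
  have hshift (x : M) : LipschitzWith 1 (fun y ↦ f (x + y)) := by
    simpa [Function.comp_def] using hf.comp (isometry_add_left x).lipschitz
  rw [integral_conv h₁, integral_conv h₂,
    ← integral_sub h₁.integral_comp_add_conv h₂.integral_comp_add_conv]
  calc ∫ x, (∫ y, f (x + y) ∂μ₁ - ∫ y, f (x + y) ∂μ₂) ∂ν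
      ≤ ∫ _, ε ∂ν :=
        integral_mono (h₁.integral_comp_add_conv.sub h₂.integral_comp_add_conv)
          (integrable_const ε) fun x ↦ hμ _ (hshift x)
    _ = ν.real Set.univ * ε := by rw [integral_const, smul_eq_mul]

theorem convolution_hutchinson_estimate_general
    (μ₁ μ₂ ν₁ ν₂ : Measure ℝ)
    [IsFiniteMeasure μ₁] [IsFiniteMeasure μ₂] [IsFiniteMeasure ν₁] [IsFiniteMeasure ν₂]
    (hμ₁c : IsCompact (msupp μ₁)) (hμ₂c : IsCompact (msupp μ₂))
    (hν₁c : IsCompact (msupp ν₁)) (hν₂c : IsCompact (msupp ν₂))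
    (ε₁ ε₂ : ℝ)
    (hμ : ∀ f : ℝ → ℝ, LipschitzWith 1 f → ∫ x, f x ∂μ₁ - ∫ x, f x ∂μ₂ ≤ ε₁)
    (hν : ∀ f : ℝ → ℝ, LipschitzWith 1 f → ∫ x, f x ∂ν₁ - ∫ x, f x ∂ν₂ ≤ ε₂) :
    ∀ f : ℝ → ℝ, LipschitzWith 1 f →
      ∫ z, f z ∂(mconv μ₁ ν₁) - ∫ z, f z ∂(mconv μ₂ ν₂) ≤
        (ν₁ Set.univ).toReal * ε₁ + (μ₂ Set.univ).toReal * ε₂ := by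
  intro f hf
  rw [msupp_eq_support] at hμ₁c hμ₂c hν₁c hν₂c
  rw [mconv_eq_conv, mconv_eq_conv, ← measureReal_def, ← measureReal_def]
  have hμ_step : ∫ z, f z ∂(μ₁ ∗ ν₁) - ∫ z, f z ∂(μ₂ ∗ ν₁) ≤ ν₁.real Set.univ * ε₁ := by
    rw [Measure.conv_comm μ₁, Measure.conv_comm μ₂]
    exact integral_conv_sub_integral_conv_le hν₁c hμ₁c hμ₂c hμ hf
  have hν_step : ∫ z, f z ∂(μ₂ ∗ ν₁) - ∫ z, f z ∂(μ₂ ∗ ν₂) ≤ μ₂.real Set.univ * ε₂ :=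
    integral_conv_sub_integral_conv_le hμ₂c hν₁c hν₂c hν hf
  linarith

/-- Quantitative continuity of the convolution w.r.t. the Hutchinson metric (Lemma 1). -/
theorem convolution_hutchinson_estimate
    (μ₁ μ₂ ν₁ ν₂ : Measure ℝ)
    [IsFiniteMeasure μ₁] [IsFiniteMeasure μ₂] [IsFiniteMeasure ν₁] [IsFiniteMeasure ν₂]
    (hμ₁c : IsCompact (msupp μ₁)) (hμ₂c : IsCompact (msupp μ₂))
    (hν₁c : IsCompact (msupp ν₁)) (hν₂c : IsCompact (msupp ν₂))
    (ε₁ ε₂ : ℝ) (hε₁ : 0 ≤ ε₁) (hε₂ : 0 ≤ ε₂)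
    (hμ : ∀ f : ℝ → ℝ, LipschitzWith 1 f → ∫ x, f x ∂μ₁ - ∫ x, f x ∂μ₂ ≤ ε₁)
    (hν : ∀ f : ℝ → ℝ, LipschitzWith 1 f → ∫ x, f x ∂ν₁ - ∫ x, f x ∂ν₂ ≤ ε₂) :
    ∀ f : ℝ → ℝ, LipschitzWith 1 f →
      ∫ z, f z ∂(mconv μ₁ ν₁) - ∫ z, f z ∂(mconv μ₂ ν₂) ≤
        (ν₁ Set.univ).toReal * ε₁ + (μ₂ Set.univ).toReal * ε₂ :=
  convolution_hutchinson_estimate_general μ₁ μ₂ ν₁ ν₂ hμ₁c hμ₂c hν₁c hν₂c ε₁ ε₂ hμ hν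
end

section
/- Let μ and ν be nonzero finite Borel measures on ℝ with compact support, x₋ = inf(supp μ), y₋ = inf(supp ν), z₋ = x₋ + y₋. Then for every ε > 0: μ(B(x₋, ε/2)) · ν(B(y₋, ε/2)) ≤ (μ ∗ ν)(B(z₋, ε)) ≤ μ(B(x₋, ε)) · ν(B(y₋, ε)). -/
open MeasureTheory Topology Filter

/-! The lower bound holds for any centres: a pair in `B(x₋, ε/2) × B(y₋, ε/2)` has its sum
in `B(z₋, ε)`. For the upper bound, `μ × ν`-almost every pair `(x, y)` satisfies `x₋ ≤ x` and
`y₋ ≤ y`, and for such a pair `|x + y - z₋| < ε` forces both `x - x₋` and `y - y₋` into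
`[0, ε)`. -/

open Metric

lemma measure_compl_msupp (μ : Measure ℝ) : μ (msupp μ)ᶜ = 0 := by
  refine measure_null_of_locally_null _ fun x hx => ?_
  simp only [msupp, Set.mem_compl_iff, Set.mem_ofPred_eq, not_forall, not_lt,
    nonpos_iff_eq_zero] at hx
  obtain ⟨δ, hδ, hball⟩ := hx
  exact ⟨ball x δ, nhdsWithin_le_nhds (ball_mem_nhds x hδ), hball⟩

lemma ae_sInf_msupp_le {μ : Measure ℝ} (h : BddBelow (msupp μ)) :
    ∀ᵐ x ∂μ, sInf (msupp μ) ≤ x :=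
  (ae_iff.mpr (measure_compl_msupp μ)).mono fun _ hx => csInf_le h hx

lemma mconv_apply (μ ν : Measure ℝ) {s : Set ℝ} (hs : MeasurableSet s) :
    mconv μ ν s = μ.prod ν ((fun p : ℝ × ℝ => p.1 + p.2) ⁻¹' s) :=
  Measure.map_apply (by fun_prop) hs

lemma mul_le_mconv_ball_add (μ ν : Measure ℝ) [SFinite ν] (a b r s : ℝ) :
    μ (ball a r) * ν (ball b s) ≤ mconv μ ν (ball (a + b) (r + s)) := by
  rw [mconv_apply _ _ measurableSet_ball, ← Measure.prod_prod]
  exact measure_mono fun p ⟨hx, hy⟩ => (dist_add_add_le _ _ _ _).trans_lt (add_lt_add hx hy)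

lemma mconv_ball_add_le {μ ν : Measure ℝ} {a b : ℝ} (ha : ∀ᵐ x ∂μ, a ≤ x)
    (hb : ∀ᵐ y ∂ν, b ≤ y) (ε : ℝ) :
    mconv μ ν (ball (a + b) ε) ≤ μ (ball a ε) * ν (ball b ε) := by
  rw [mconv_apply _ _ measurableSet_ball]
  refine (measure_mono_ae ?_).trans (Measure.prod_prod_le _ _)
  filter_upwards [Measure.quasiMeasurePreserving_fst.ae ha,
    Measure.quasiMeasurePreserving_snd.ae hb] with p hap hbp (hp : p.1 + p.2 ∈ ball (a + b) ε)
  show p ∈ ball a ε ×ˢ ball b ε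
  simp only [mem_ball, Real.dist_eq, abs_lt] at hp
  simp only [Set.mem_prod, mem_ball, Real.dist_eq, abs_lt]
  constructor <;> constructor <;> linarith

theorem convolution_ball_boundary_bounds_general
    (μ ν : Measure ℝ) [IsFiniteMeasure ν]
    (hμc : IsCompact (msupp μ)) (hνc : IsCompact (msupp ν))
    (ε : ℝ) :
    μ (Metric.ball (sInf (msupp μ)) (ε/2)) * ν (Metric.ball (sInf (msupp ν)) (ε/2)) ≤
      mconv μ ν (Metric.ball (sInf (msupp μ) + sInf (msupp ν)) ε) ∧
    mconv μ ν (Metric.ball (sInf (msupp μ) + sInf (msupp ν)) ε) ≤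
      μ (Metric.ball (sInf (msupp μ)) ε) * ν (Metric.ball (sInf (msupp ν)) ε) := by
  refine ⟨?_, mconv_ball_add_le (ae_sInf_msupp_le hμc.bddBelow)
    (ae_sInf_msupp_le hνc.bddBelow) ε⟩
  simpa only [add_halves] using
    mul_le_mconv_ball_add μ ν (sInf (msupp μ)) (sInf (msupp ν)) (ε / 2) (ε / 2)

/-- Two-sided estimate for the measure of a ball around the left boundary of the
support of a convolution (key step in the proof of Lemma 2). -/
theorem convolution_ball_boundary_bounds
    (μ ν : Measure ℝ) [IsFiniteMeasure μ] [IsFiniteMeasure ν]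
    (hμ0 : μ ≠ 0) (hν0 : ν ≠ 0)
    (hμc : IsCompact (msupp μ)) (hνc : IsCompact (msupp ν))
    (ε : ℝ) (hε : 0 < ε) :
    μ (Metric.ball (sInf (msupp μ)) (ε/2)) * ν (Metric.ball (sInf (msupp ν)) (ε/2)) ≤
      mconv μ ν (Metric.ball (sInf (msupp μ) + sInf (msupp ν)) ε) ∧
    mconv μ ν (Metric.ball (sInf (msupp μ) + sInf (msupp ν)) ε) ≤
      μ (Metric.ball (sInf (msupp μ)) ε) * ν (Metric.ball (sInf (msupp ν)) ε) :=
  convolution_ball_boundary_bounds_general μ ν hμc hνc ε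
end

section
/- Let μ and ν be nonzero finite Borel measures on ℝ with compact support and let q > 1. Define S_q(ρ, ε) = Σ_{i ∈ ℤ} ρ(B(iε, ε/2))^q. Suppose the limits D_q(μ) = lim_{ε→0⁺} (1/(q−1)) · log S_q(μ, ε) / log ε, D_q(ν) = lim_{ε→0⁺} (1/(q−1)) · log S_q(ν, ε) / log ε, and D_q(μ ∗ ν) = lim_{ε→0⁺} (1/(q−1)) · log S_q(μ ∗ ν, ε) / log ε all exist. Then D_q(μ ∗ ν) ≤ D_q(μ) + D_q(ν). (Theorem 1, case q > 1.) -/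
open MeasureTheory Topology Filter

namespace DqConv

open ENNReal

lemma measurable_add2 : Measurable (fun p : ℝ × ℝ => p.1 + p.2) :=
  measurable_fst.add measurable_snd

lemma tsum_rpow_le {f : ℤ → ℝ≥0∞} {q : ℝ} (hq : 1 ≤ q) :
    ∑' i, f i ^ q ≤ (∑' i, f i) ^ q := by
  have hq0 : (0:ℝ) ≤ q - 1 := by linarith
  calc ∑' i, f i ^ q ≤ ∑' i, (∑' j, f j) ^ (q-1) * f i := by
        refine ENNReal.tsum_le_tsum fun i => ?_
        have e1 : f i ^ q = f i ^ (q-1) * f i := by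
          rw [show q = (q-1) + 1 by ring, ENNReal.rpow_add_of_nonneg _ _ hq0 zero_le_one,
            ENNReal.rpow_one, show q - 1 + 1 - 1 = q - 1 by ring]
        rw [e1]
        exact mul_le_mul_left (ENNReal.rpow_le_rpow (ENNReal.le_tsum i) hq0) _
    _ = (∑' j, f j) ^ (q-1) * ∑' i, f i := ENNReal.tsum_mul_left
    _ = (∑' i, f i) ^ q := by
        rw [show q = (q-1) + 1 by ring, ENNReal.rpow_add_of_nonneg _ _ hq0 zero_le_one,
          ENNReal.rpow_one, show q - 1 + 1 - 1 = q - 1 by ring]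

lemma rpow_add3_le {x y z : ℝ≥0∞} {q : ℝ} (hq : 0 ≤ q) :
    (x + y + z) ^ q ≤ 3 ^ q * (x ^ q + y ^ q + z ^ q) := by
  have hmono : Monotone (fun t : ℝ≥0∞ => t ^ q) := fun a b hab => ENNReal.rpow_le_rpow hab hq
  have h1 : x + y + z ≤ 3 * (x ⊔ y ⊔ z) := by
    have hx : x ≤ x ⊔ y ⊔ z := le_sup_of_le_left le_sup_left
    have hy : y ≤ x ⊔ y ⊔ z := le_sup_of_le_left le_sup_right
    have hz : z ≤ x ⊔ y ⊔ z := le_sup_right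
    calc x + y + z ≤ (x ⊔ y ⊔ z) + (x ⊔ y ⊔ z) + (x ⊔ y ⊔ z) := by
          exact add_le_add (add_le_add hx hy) hz
      _ = 3 * (x ⊔ y ⊔ z) := by ring
  calc (x + y + z) ^ q ≤ (3 * (x ⊔ y ⊔ z)) ^ q := ENNReal.rpow_le_rpow h1 hq
    _ = 3 ^ q * (x ⊔ y ⊔ z) ^ q := ENNReal.mul_rpow_of_nonneg _ _ hq
    _ ≤ 3 ^ q * (x ^ q + y ^ q + z ^ q) := by
        apply mul_le_mul_right
        rw [hmono.map_sup, hmono.map_sup]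
        refine sup_le (sup_le ?_ ?_) ?_
        · exact le_add_of_le_of_nonneg (le_add_of_le_of_nonneg le_rfl zero_le') zero_le'
        · exact le_add_of_le_of_nonneg (le_add_of_nonneg_left zero_le') zero_le'
        · exact le_add_of_nonneg_left zero_le'

lemma ball_disj {ε : ℝ} (hε : 0 < ε) :
    Pairwise (Function.onFun Disjoint fun i : ℤ => Metric.ball ((i:ℝ) * ε) (ε/2)) := by
  intro i j hij
  simp only [Function.onFun]
  rw [Set.disjoint_left]
  intro x hx hx'
  rw [Metric.mem_ball, Real.dist_eq] at hx hx'
  have h1 : (1:ℝ) ≤ |(i:ℝ) - j| := by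
    have h := Int.one_le_abs (sub_ne_zero.mpr hij)
    have h2 : (1:ℝ) ≤ ((|i - j| : ℤ) : ℝ) := by exact_mod_cast h
    rwa [Int.cast_abs, Int.cast_sub] at h2
  have h2 : |(i:ℝ) - j| * ε < ε := by
    have : |(i:ℝ) * ε - (j:ℝ) * ε| < ε := by
      calc |(i:ℝ) * ε - (j:ℝ) * ε| = |((i:ℝ) * ε - x) + (x - (j:ℝ) * ε)| := by ring_nf
        _ ≤ |(i:ℝ) * ε - x| + |x - (j:ℝ) * ε| := abs_add_le _ _
        _ = |x - (i:ℝ) * ε| + |x - (j:ℝ) * ε| := by rw [abs_sub_comm]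
        _ < ε/2 + ε/2 := add_lt_add hx hx'
        _ = ε := by ring
    calc |(i:ℝ) - j| * ε = |((i:ℝ) - j) * ε| := by rw [abs_mul, abs_of_pos hε]
      _ = |(i:ℝ) * ε - (j:ℝ) * ε| := by ring_nf
      _ < ε := this
  nlinarith

/-- The key counting inequality in `ℝ≥0∞`, valid when the half-grid points are not
atoms of the convolution. -/
lemma key_ineq (μ ν : Measure ℝ) [IsFiniteMeasure μ] [IsFiniteMeasure ν]
    {q ε : ℝ} (hq : 1 ≤ q) (hε : 0 < ε)
    (hpt : ∀ m : ℤ, mconv μ ν {((m:ℝ) + 1/2) * ε} = 0) :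
    (∑' i : ℤ, μ (Metric.ball ((i:ℝ) * ε) (ε/2)) ^ q) *
      (∑' i : ℤ, ν (Metric.ball ((i:ℝ) * ε) (ε/2)) ^ q) ≤
      3 ^ (q+1) * ∑' i : ℤ, mconv μ ν (Metric.ball ((i:ℝ) * ε) (ε/2)) ^ q := by
  have hq0 : (0:ℝ) ≤ q := le_trans zero_le_one hq
  set A : ℤ → ℝ≥0∞ := fun i => μ (Metric.ball ((i:ℝ) * ε) (ε/2)) with hA
  set B : ℤ → ℝ≥0∞ := fun i => ν (Metric.ball ((i:ℝ) * ε) (ε/2)) with hB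
  set D : ℤ → ℝ≥0∞ := fun i => mconv μ ν (Metric.ball ((i:ℝ) * ε) (ε/2)) with hD
  set C : ℤ → ℝ≥0∞ := fun k => mconv μ ν (Metric.ball ((k:ℝ) * ε) ε) with hC
  -- step 1 : ∑' i, A i * B (k - i) ≤ C k
  have step1 : ∀ k : ℤ, (∑' i : ℤ, A i * B (k - i)) ≤ C k := by
    intro k
    have hsub : ∀ i : ℤ,
        (Metric.ball ((i:ℝ) * ε) (ε/2)) ×ˢ (Metric.ball (((k - i : ℤ):ℝ) * ε) (ε/2)) ⊆
          (fun p : ℝ × ℝ => p.1 + p.2) ⁻¹' Metric.ball ((k:ℝ) * ε) ε := by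
      intro i p hp
      obtain ⟨h1, h2⟩ := hp
      rw [Metric.mem_ball, Real.dist_eq] at h1 h2
      simp only [Set.mem_preimage, Metric.mem_ball, Real.dist_eq]
      rw [abs_lt] at h1 h2 ⊢
      push_cast at h2
      constructor <;> nlinarith [h1.1, h1.2, h2.1, h2.2]
    calc (∑' i : ℤ, A i * B (k - i))
        = ∑' i : ℤ, (μ.prod ν)
            ((Metric.ball ((i:ℝ) * ε) (ε/2)) ×ˢ (Metric.ball (((k - i : ℤ):ℝ) * ε) (ε/2))) := by
          simp [hA, hB, Measure.prod_prod]
      _ ≤ (μ.prod ν) (⋃ i : ℤ,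
            (Metric.ball ((i:ℝ) * ε) (ε/2)) ×ˢ (Metric.ball (((k - i : ℤ):ℝ) * ε) (ε/2))) := by
          refine tsum_meas_le_meas_iUnion_of_disjoint _ (fun i => measurableSet_ball.prod measurableSet_ball) ?_
          intro i j hij
          exact Set.disjoint_left.mpr fun p hp hp' =>
            Set.disjoint_left.mp (ball_disj hε hij) hp.1 hp'.1
      _ ≤ (μ.prod ν) ((fun p : ℝ × ℝ => p.1 + p.2) ⁻¹' Metric.ball ((k:ℝ) * ε) ε) :=
          measure_mono (Set.iUnion_subset hsub)
      _ = C k := by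
          show _ = mconv μ ν (Metric.ball ((k:ℝ) * ε) ε)
          rw [mconv, Measure.map_apply measurable_add2 measurableSet_ball]
  -- step 2 : C k ≤ D (k-1) + D k + D (k+1)
  have step2 : ∀ k : ℤ, C k ≤ D (k-1) + D k + D (k+1) := by
    intro k
    set s1 : Set ℝ := Metric.ball (((k-1:ℤ):ℝ) * ε) (ε/2) with hs1
    set s2 : Set ℝ := Metric.ball (((k:ℤ):ℝ) * ε) (ε/2) with hs2
    set s3 : Set ℝ := Metric.ball (((k+1:ℤ):ℝ) * ε) (ε/2) with hs3
    set p1 : Set ℝ := {(((k-1:ℤ):ℝ) + 1/2) * ε} with hp1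
    set p2 : Set ℝ := {(((k:ℤ):ℝ) + 1/2) * ε} with hp2
    have cover : Metric.ball ((k:ℝ) * ε) ε ⊆ ((s1 ∪ s2) ∪ s3) ∪ (p1 ∪ p2) := by
      intro x hx
      rw [Metric.mem_ball, Real.dist_eq, abs_lt] at hx
      obtain ⟨hx1, hx2⟩ := hx
      rcases lt_trichotomy x (((k:ℝ) - 1/2) * ε) with h | h | h
      · left; left; left
        rw [hs1, Metric.mem_ball, Real.dist_eq, abs_lt]
        push_cast
        constructor <;> nlinarith
      · right; left
        rw [hp1]
        simp only [Set.mem_singleton_iff]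
        push_cast
        linarith
      · rcases lt_trichotomy x (((k:ℝ) + 1/2) * ε) with h' | h' | h'
        · left; left; right
          rw [hs2, Metric.mem_ball, Real.dist_eq, abs_lt]
          push_cast
          constructor <;> nlinarith
        · right; right
          rw [hp2]
          simp only [Set.mem_singleton_iff]
          push_cast
          linarith
        · left; right
          rw [hs3, Metric.mem_ball, Real.dist_eq, abs_lt]
          push_cast
          constructor <;> nlinarith
    have hDs : mconv μ ν s1 = D (k-1) ∧ mconv μ ν s2 = D k ∧ mconv μ ν s3 = D (k+1) := by
      refine ⟨?_, ?_, ?_⟩ <;> simp [hD, hs1, hs2, hs3]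
    calc C k ≤ mconv μ ν (((s1 ∪ s2) ∪ s3) ∪ (p1 ∪ p2)) := measure_mono cover
      _ ≤ mconv μ ν ((s1 ∪ s2) ∪ s3) + mconv μ ν (p1 ∪ p2) := measure_union_le _ _
      _ ≤ (mconv μ ν (s1 ∪ s2) + mconv μ ν s3) + 0 := by
          refine add_le_add (measure_union_le _ _) ?_
          rw [measure_union_null (by rw [hp1]; exact hpt (k-1)) (by rw [hp2]; exact hpt k)]
      _ ≤ (mconv μ ν s1 + mconv μ ν s2 + mconv μ ν s3) + 0 := by
          exact add_le_add (add_le_add (measure_union_le _ _) le_rfl) le_rfl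
      _ = D (k-1) + D k + D (k+1) := by rw [add_zero, hDs.1, hDs.2.1, hDs.2.2]
  -- assemble
  have hP : ∀ (F : ℤ × ℤ → ℝ≥0∞), ∑' p : ℤ × ℤ, F p = ∑' k : ℤ, ∑' i : ℤ, F (k, i) :=
    fun F => Summable.tsum_prod' ENNReal.summable (fun _ => ENNReal.summable)
  have regroup : (∑' i : ℤ, A i ^ q) * (∑' j : ℤ, B j ^ q) =
      ∑' k : ℤ, ∑' i : ℤ, A i ^ q * B (k - i) ^ q := by
    have h1 : (∑' i : ℤ, A i ^ q) * (∑' j : ℤ, B j ^ q) =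
        ∑' p : ℤ × ℤ, A p.1 ^ q * B p.2 ^ q := by
      rw [hP (fun p => A p.1 ^ q * B p.2 ^ q)]
      simp_rw [ENNReal.tsum_mul_left]
      rw [ENNReal.tsum_mul_right]
    let e : ℤ × ℤ ≃ ℤ × ℤ :=
      ⟨fun p => (p.2, p.1 - p.2), fun p => (p.1 + p.2, p.1),
        fun p => by simp, fun p => by simp⟩
    have h2 : ∑' p : ℤ × ℤ, A p.1 ^ q * B p.2 ^ q =
        ∑' p : ℤ × ℤ, A p.2 ^ q * B (p.1 - p.2) ^ q := by
      rw [← Equiv.tsum_eq e (fun p : ℤ × ℤ => A p.1 ^ q * B p.2 ^ q)]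
      exact tsum_congr fun p => by simp [e]
    rw [h1, h2]
    exact hP (fun p => A p.2 ^ q * B (p.1 - p.2) ^ q)
  calc (∑' i : ℤ, A i ^ q) * (∑' j : ℤ, B j ^ q)
      = ∑' k : ℤ, ∑' i : ℤ, A i ^ q * B (k - i) ^ q := regroup
    _ ≤ ∑' k : ℤ, C k ^ q := by
        refine ENNReal.tsum_le_tsum fun k => ?_
        calc ∑' i : ℤ, A i ^ q * B (k - i) ^ q
            = ∑' i : ℤ, (A i * B (k - i)) ^ q := by
              simp_rw [ENNReal.mul_rpow_of_nonneg _ _ hq0]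
          _ ≤ (∑' i : ℤ, A i * B (k - i)) ^ q := tsum_rpow_le hq
          _ ≤ C k ^ q := ENNReal.rpow_le_rpow (step1 k) hq0
    _ ≤ ∑' k : ℤ, 3 ^ q * (D (k-1) ^ q + D k ^ q + D (k+1) ^ q) := by
        refine ENNReal.tsum_le_tsum fun k => ?_
        exact le_trans (ENNReal.rpow_le_rpow (step2 k) hq0) (rpow_add3_le hq0)
    _ = 3 ^ q * ((∑' k : ℤ, D (k-1) ^ q) + (∑' k : ℤ, D k ^ q) + (∑' k : ℤ, D (k+1) ^ q)) := by
        rw [ENNReal.tsum_mul_left, ENNReal.tsum_add, ENNReal.tsum_add]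
    _ = 3 ^ (q+1) * ∑' i : ℤ, D i ^ q := by
        have e1 : (∑' k : ℤ, D (k-1) ^ q) = ∑' k : ℤ, D k ^ q :=
          Equiv.tsum_eq (Equiv.subRight (1:ℤ)) (fun k => D k ^ q)
        have e2 : (∑' k : ℤ, D (k+1) ^ q) = ∑' k : ℤ, D k ^ q :=
          Equiv.tsum_eq (Equiv.addRight (1:ℤ)) (fun k => D k ^ q)
        rw [e1, e2, show (3:ENNReal) ^ (q+1) = 3 ^ q * 3 ^ (1:ℝ) from
          ENNReal.rpow_add_of_nonneg _ _ hq0 zero_le_one, ENNReal.rpow_one]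
        ring

lemma S_le (ρ : Measure ℝ) {q ε : ℝ} (hq : 1 ≤ q) (hε : 0 < ε) :
    ∑' i : ℤ, ρ (Metric.ball ((i:ℝ) * ε) (ε/2)) ^ q ≤ ρ Set.univ ^ q := by
  refine le_trans (tsum_rpow_le hq) (ENNReal.rpow_le_rpow ?_ (le_trans zero_le_one hq))
  refine le_trans (tsum_meas_le_meas_iUnion_of_disjoint ρ
    (fun i => measurableSet_ball) (ball_disj hε)) (measure_mono (Set.subset_univ _))

lemma S_lt_top (ρ : Measure ℝ) [IsFiniteMeasure ρ] {q ε : ℝ} (hq : 1 ≤ q) (hε : 0 < ε) :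
    ∑' i : ℤ, ρ (Metric.ball ((i:ℝ) * ε) (ε/2)) ^ q < ⊤ :=
  lt_of_le_of_lt (S_le ρ hq hε)
    (ENNReal.rpow_lt_top_of_nonneg (le_trans zero_le_one hq) (measure_ne_top ρ _))

lemma cover_univ {ε : ℝ} (hε : 0 < ε) :
    (Set.univ : Set ℝ) ⊆ (⋃ i : ℤ, Metric.ball ((i:ℝ) * ε) (ε/2)) ∪
      (⋃ m : ℤ, {((m:ℝ) + 1/2) * ε}) := by
  intro x _
  set i : ℤ := round (x / ε) with hi
  have h1 : |x / ε - (i:ℝ)| ≤ 1/2 := abs_sub_round (x / ε)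
  rcases lt_or_eq_of_le h1 with h | h
  · left
    refine Set.mem_iUnion.mpr ⟨i, ?_⟩
    rw [Metric.mem_ball, Real.dist_eq]
    have hlt : |x / ε - (i:ℝ)| * ε < (1/2) * ε := mul_lt_mul_of_pos_right h hε
    calc |x - (i:ℝ) * ε| = |(x / ε - (i:ℝ)) * ε| := by
          rw [sub_mul, div_mul_cancel₀ _ hε.ne']
      _ = |x / ε - (i:ℝ)| * ε := by rw [abs_mul, abs_of_pos hε]
      _ < ε / 2 := by linarith
  · right
    rw [abs_eq (by norm_num : (0:ℝ) ≤ 1/2)] at h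
    rcases h with h | h
    · refine Set.mem_iUnion.mpr ⟨i, ?_⟩
      simp only [Set.mem_singleton_iff]
      have : x / ε = (i:ℝ) + 1/2 := by linarith
      field_simp at this
      linarith [this]
    · refine Set.mem_iUnion.mpr ⟨i - 1, ?_⟩
      simp only [Set.mem_singleton_iff]
      have : x / ε = (i:ℝ) - 1/2 := by linarith
      push_cast
      have hx : x = ((i:ℝ) - 1/2) * ε := by
        field_simp at this
        linarith [this]
      rw [hx]
      ring

lemma S_pos (ρ : Measure ℝ) [IsFiniteMeasure ρ] (hρ : ρ ≠ 0) {q ε : ℝ} (hq : 0 ≤ q) (hε : 0 < ε)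
    (hpt : ∀ m : ℤ, ρ {((m:ℝ) + 1/2) * ε} = 0) :
    0 < ∑' i : ℤ, ρ (Metric.ball ((i:ℝ) * ε) (ε/2)) ^ q := by
  have huniv : ρ Set.univ ≠ 0 := by
    simpa [Measure.measure_univ_eq_zero] using hρ
  have hsum : ρ Set.univ ≤ ∑' i : ℤ, ρ (Metric.ball ((i:ℝ) * ε) (ε/2)) := by
    calc ρ Set.univ ≤ ρ ((⋃ i : ℤ, Metric.ball ((i:ℝ) * ε) (ε/2)) ∪
          (⋃ m : ℤ, {((m:ℝ) + 1/2) * ε})) := measure_mono (cover_univ hε)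
      _ ≤ ρ (⋃ i : ℤ, Metric.ball ((i:ℝ) * ε) (ε/2)) +
          ρ (⋃ m : ℤ, {((m:ℝ) + 1/2) * ε}) := measure_union_le _ _
      _ = ρ (⋃ i : ℤ, Metric.ball ((i:ℝ) * ε) (ε/2)) := by
          rw [measure_iUnion_null (fun m => hpt m), add_zero]
      _ ≤ ∑' i : ℤ, ρ (Metric.ball ((i:ℝ) * ε) (ε/2)) := measure_iUnion_le _
  have hne : ∃ i : ℤ, ρ (Metric.ball ((i:ℝ) * ε) (ε/2)) ≠ 0 := by
    by_contra h
    push_neg at h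
    rw [show (∑' i : ℤ, ρ (Metric.ball ((i:ℝ) * ε) (ε/2))) = 0 from by simp [h]] at hsum
    exact huniv (le_antisymm hsum zero_le')
  obtain ⟨i, hi⟩ := hne
  have : 0 < ρ (Metric.ball ((i:ℝ) * ε) (ε/2)) ^ q := by
    rw [pos_iff_ne_zero]
    simp only [ne_eq, ENNReal.rpow_eq_zero_iff, not_or, not_and, not_lt]
    exact ⟨fun h => absurd h hi, fun h => absurd h (measure_ne_top ρ _)⟩
  exact lt_of_lt_of_le this (ENNReal.le_tsum i)

instance mconv_finite (μ ν : Measure ℝ) [IsFiniteMeasure μ] [IsFiniteMeasure ν] :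
    IsFiniteMeasure (mconv μ ν) := by
  constructor
  rw [mconv, Measure.map_apply measurable_add2 MeasurableSet.univ, Set.preimage_univ]
  exact measure_lt_top _ _

lemma mconv_ne_zero (μ ν : Measure ℝ) [IsFiniteMeasure μ] [IsFiniteMeasure ν]
    (hμ0 : μ ≠ 0) (hν0 : ν ≠ 0) : mconv μ ν ≠ 0 := by
  have h : mconv μ ν Set.univ = μ Set.univ * ν Set.univ := by
    rw [mconv, Measure.map_apply measurable_add2 MeasurableSet.univ, Set.preimage_univ,
      ← Set.univ_prod_univ, Measure.prod_prod]
  intro hzero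
  rw [hzero] at h
  simp only [Measure.coe_zero, Pi.zero_apply] at h
  rcases mul_eq_zero.mp h.symm with h' | h'
  · exact hμ0 (Measure.measure_univ_eq_zero.mp h')
  · exact hν0 (Measure.measure_univ_eq_zero.mp h')

lemma countable_atoms (ρ : Measure ℝ) [IsFiniteMeasure ρ] :
    Set.Countable {x : ℝ | ρ {x} ≠ 0} := by
  have h := MeasureTheory.Measure.countable_meas_pos_of_disjoint_of_meas_iUnion_ne_top
    (μ := ρ) (As := fun x : ℝ => {x}) (fun x => measurableSet_singleton x)
    (fun x y hxy => by simp [Function.onFun, Set.disjoint_singleton, hxy])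
    (measure_ne_top ρ _)
  refine h.mono fun x hx => ?_
  simpa [pos_iff_ne_zero] using hx

lemma S_toReal (ρ : Measure ℝ) [IsFiniteMeasure ρ] {q : ℝ} (hq : 0 ≤ q) (e : ℝ) :
    (∑' i : ℤ, ((ρ (Metric.ball ((i:ℝ) * e) (e/2))).toReal) ^ q)
      = (∑' i : ℤ, ρ (Metric.ball ((i:ℝ) * e) (e/2)) ^ q).toReal := by
  calc (∑' i : ℤ, ((ρ (Metric.ball ((i:ℝ) * e) (e/2))).toReal) ^ q)
      = ∑' i : ℤ, ((ρ (Metric.ball ((i:ℝ) * e) (e/2))) ^ q).toReal :=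
        tsum_congr fun i => ENNReal.toReal_rpow _ _
    _ = (∑' i : ℤ, ρ (Metric.ball ((i:ℝ) * e) (e/2)) ^ q).toReal :=
        (ENNReal.tsum_toReal_eq
          (fun i => ENNReal.rpow_ne_top_of_nonneg hq (measure_ne_top ρ _))).symm

end DqConv

/-- Theorem 1, case q > 1: the generalized box dimension of the convolution is bounded
from above by the sum of the generalized box dimensions of the factors. -/
theorem Dq_convolution_le_of_one_lt
    (μ ν : Measure ℝ) [IsFiniteMeasure μ] [IsFiniteMeasure ν]
    (hμ0 : μ ≠ 0) (hν0 : ν ≠ 0)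
    (hμc : IsCompact (msupp μ)) (hνc : IsCompact (msupp ν))
    (q Dμ Dν Dc : ℝ) (hq : 1 < q)
    (hμ : Tendsto (fun ε : ℝ =>
        (1/(q-1)) * Real.log (∑' i : ℤ, ((μ (Metric.ball ((i : ℝ) * ε) (ε/2))).toReal) ^ q) /
          Real.log ε) (𝓝[>] 0) (𝓝 Dμ))
    (hν : Tendsto (fun ε : ℝ =>
        (1/(q-1)) * Real.log (∑' i : ℤ, ((ν (Metric.ball ((i : ℝ) * ε) (ε/2))).toReal) ^ q) /
          Real.log ε) (𝓝[>] 0) (𝓝 Dν))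
    (hc : Tendsto (fun ε : ℝ =>
        (1/(q-1)) *
            Real.log (∑' i : ℤ, ((mconv μ ν (Metric.ball ((i : ℝ) * ε) (ε/2))).toReal) ^ q) /
          Real.log ε) (𝓝[>] 0) (𝓝 Dc)) :
    Dc ≤ Dμ + Dν := by
  classical
  have hq1 : (0:ℝ) < q - 1 := by linarith
  have hqle : (1:ℝ) ≤ q := hq.le
  have hq0 : (0:ℝ) ≤ q := by linarith
  have hκ0 : mconv μ ν ≠ 0 := DqConv.mconv_ne_zero μ ν hμ0 hν0
  -- the set of bad scales (where a half-grid point is an atom) is countable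
  set Atom : Set ℝ := {x | μ {x} ≠ 0} ∪ {x | ν {x} ≠ 0} ∪ {x | mconv μ ν {x} ≠ 0} with hAtomDef
  have hAtomC : Atom.Countable :=
    ((DqConv.countable_atoms μ).union (DqConv.countable_atoms ν)).union
      (DqConv.countable_atoms (mconv μ ν))
  set Bad : Set ℝ := ⋃ m : ℤ, (fun ε : ℝ => ((m:ℝ) + 1/2) * ε) ⁻¹' Atom with hBadDef
  have hBadC : Bad.Countable := by
    refine Set.countable_iUnion fun m => hAtomC.preimage ?_
    have hm : ((m:ℝ) + 1/2) ≠ 0 := by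
      rcases le_or_gt 0 m with h | h
      · have : (0:ℝ) ≤ (m:ℝ) := by exact_mod_cast h
        positivity
      · have hm1 : m ≤ -1 := by omega
        have : (m:ℝ) ≤ -1 := by exact_mod_cast hm1
        intro hcon
        linarith
    exact mul_right_injective₀ hm
  -- choose a sequence of good scales tending to 0
  have hex : ∀ n : ℕ, ∃ x : ℝ, x ∈ Set.Ioo (0:ℝ) (min (1:ℝ) (1/(n+1))) \ Bad := by
    intro n
    have hlt : (0:ℝ) < min (1:ℝ) (1/(n+1)) := lt_min one_pos (by positivity)
    by_contra h
    push_neg at h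
    have hsub : Set.Ioo (0:ℝ) (min (1:ℝ) (1/(n+1))) ⊆ Bad := by
      intro x hx
      by_contra hxB
      exact (h x) ⟨hx, hxB⟩
    have hcnt : (Set.Ioo (0:ℝ) (min (1:ℝ) (1/(n+1)))).Countable := hBadC.mono hsub
    have h1 : (Cardinal.mk (Set.Ioo (0:ℝ) (min (1:ℝ) (1/(n+1))))) ≤ Cardinal.aleph0 :=
      Cardinal.le_aleph0_iff_set_countable.mpr hcnt
    rw [Cardinal.mk_Ioo_real hlt] at h1
    exact Cardinal.aleph0_lt_continuum.not_ge h1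
  choose u hu using hex
  have hu1 : ∀ n, 0 < u n := fun n => (hu n).1.1
  have hu2 : ∀ n, u n < 1 := fun n => lt_of_lt_of_le (hu n).1.2 (min_le_left _ _)
  have hu3 : ∀ n : ℕ, u n < 1/((n:ℝ)+1) := fun n => lt_of_lt_of_le (hu n).1.2 (min_le_right _ _)
  have hun : Tendsto u atTop (𝓝 0) :=
    squeeze_zero (fun n => (hu1 n).le) (fun n => (hu3 n).le)
      tendsto_one_div_add_atTop_nhds_zero_nat
  have huw : Tendsto u atTop (𝓝[>] 0) :=
    tendsto_nhdsWithin_of_tendsto_nhds_of_eventually_within u hun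
      (Eventually.of_forall fun n => hu1 n)
  -- the error term
  set K : ℝ := (3:ℝ) ^ (q+1) with hKdef
  have hKpos : 0 < K := Real.rpow_pos_of_pos (by norm_num) _
  set g : ℝ → ℝ := fun e => (1/(q-1)) * Real.log K / (- Real.log e) with hgdef
  have hgtend : Tendsto g (𝓝[>] (0:ℝ)) (𝓝 0) := by
    have hdiv : Tendsto (fun e : ℝ => - Real.log e) (𝓝[>] (0:ℝ)) atTop :=
      tendsto_neg_atBot_atTop.comp Real.tendsto_log_nhdsGT_zero
    exact Tendsto.div_atTop tendsto_const_nhds hdiv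
  -- the pointwise inequality at good scales
  have key : ∀ n : ℕ,
      (1/(q-1)) *
          Real.log (∑' i : ℤ, ((mconv μ ν (Metric.ball ((i : ℝ) * u n) (u n/2))).toReal) ^ q) /
        Real.log (u n) ≤
      ((1/(q-1)) * Real.log (∑' i : ℤ, ((μ (Metric.ball ((i : ℝ) * u n) (u n/2))).toReal) ^ q) /
        Real.log (u n) +
       (1/(q-1)) * Real.log (∑' i : ℤ, ((ν (Metric.ball ((i : ℝ) * u n) (u n/2))).toReal) ^ q) /
        Real.log (u n)) + g (u n) := by
    intro n
    have he0 : 0 < u n := hu1 n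
    have he1 : u n < 1 := hu2 n
    have hgood : ∀ m : ℤ, μ {((m:ℝ) + 1/2) * u n} = 0 ∧ ν {((m:ℝ) + 1/2) * u n} = 0 ∧
        mconv μ ν {((m:ℝ) + 1/2) * u n} = 0 := by
      intro m
      have hnot : ((m:ℝ) + 1/2) * u n ∉ Atom := by
        intro hmem
        exact (hu n).2 (Set.mem_iUnion.mpr ⟨m, hmem⟩)
      rw [hAtomDef] at hnot
      simp only [Set.mem_union, Set.mem_setOf_eq, not_or, not_not] at hnot
      exact ⟨hnot.1.1, hnot.1.2, hnot.2⟩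
    -- ENNReal inequality
    have hkey := DqConv.key_ineq μ ν hqle he0 (fun m => (hgood m).2.2)
    -- positivity and finiteness
    have hPμpos : 0 < (∑' i : ℤ, μ (Metric.ball ((i:ℝ) * u n) (u n/2)) ^ q).toReal :=
      ENNReal.toReal_pos
        (DqConv.S_pos μ hμ0 hq0 he0 (fun m => (hgood m).1)).ne'
        (DqConv.S_lt_top μ hqle he0).ne
    have hPνpos : 0 < (∑' i : ℤ, ν (Metric.ball ((i:ℝ) * u n) (u n/2)) ^ q).toReal :=
      ENNReal.toReal_pos
        (DqConv.S_pos ν hν0 hq0 he0 (fun m => (hgood m).2.1)).ne'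
        (DqConv.S_lt_top ν hqle he0).ne
    have hPcpos : 0 < (∑' i : ℤ, mconv μ ν (Metric.ball ((i:ℝ) * u n) (u n/2)) ^ q).toReal :=
      ENNReal.toReal_pos
        (DqConv.S_pos (mconv μ ν) hκ0 hq0 he0 (fun m => (hgood m).2.2)).ne'
        (DqConv.S_lt_top (mconv μ ν) hqle he0).ne
    -- real-valued inequality
    have hineq : (∑' i : ℤ, μ (Metric.ball ((i:ℝ) * u n) (u n/2)) ^ q).toReal *
        (∑' i : ℤ, ν (Metric.ball ((i:ℝ) * u n) (u n/2)) ^ q).toReal ≤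
        K * (∑' i : ℤ, mconv μ ν (Metric.ball ((i:ℝ) * u n) (u n/2)) ^ q).toReal := by
      have hrhs : ((3:ENNReal) ^ (q+1) *
          ∑' i : ℤ, mconv μ ν (Metric.ball ((i:ℝ) * u n) (u n/2)) ^ q) ≠ ⊤ :=
        ENNReal.mul_ne_top
          (ENNReal.rpow_ne_top_of_nonneg (by linarith) (by norm_num))
          (DqConv.S_lt_top (mconv μ ν) hqle he0).ne
      have hlhs : ((∑' i : ℤ, μ (Metric.ball ((i:ℝ) * u n) (u n/2)) ^ q) *
          ∑' i : ℤ, ν (Metric.ball ((i:ℝ) * u n) (u n/2)) ^ q) ≠ ⊤ :=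
        ENNReal.mul_ne_top (DqConv.S_lt_top μ hqle he0).ne (DqConv.S_lt_top ν hqle he0).ne
      have h2 := (ENNReal.toReal_le_toReal hlhs hrhs).mpr hkey
      rw [ENNReal.toReal_mul, ENNReal.toReal_mul] at h2
      have h3K : ((3:ENNReal) ^ (q+1)).toReal = K := by
        rw [← ENNReal.toReal_rpow]
        norm_num [hKdef]
      rwa [h3K] at h2
    -- logarithms
    have hlog : Real.log (∑' i : ℤ, μ (Metric.ball ((i:ℝ) * u n) (u n/2)) ^ q).toReal +
        Real.log (∑' i : ℤ, ν (Metric.ball ((i:ℝ) * u n) (u n/2)) ^ q).toReal ≤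
        Real.log K +
        Real.log (∑' i : ℤ, mconv μ ν (Metric.ball ((i:ℝ) * u n) (u n/2)) ^ q).toReal := by
      rw [← Real.log_mul hPμpos.ne' hPνpos.ne', ← Real.log_mul hKpos.ne' hPcpos.ne']
      exact (Real.log_le_log_iff (by positivity) (by positivity)).mpr hineq
    have hL : Real.log (u n) < 0 := Real.log_neg he0 he1
    rw [DqConv.S_toReal μ hq0 (u n), DqConv.S_toReal ν hq0 (u n),
      DqConv.S_toReal (mconv μ ν) hq0 (u n)]
    simp only [hgdef]
    set x := Real.log (∑' i : ℤ, μ (Metric.ball ((i:ℝ) * u n) (u n/2)) ^ q).toReal with hx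
    set y := Real.log (∑' i : ℤ, ν (Metric.ball ((i:ℝ) * u n) (u n/2)) ^ q).toReal with hy
    set z := Real.log (∑' i : ℤ, mconv μ ν (Metric.ball ((i:ℝ) * u n) (u n/2)) ^ q).toReal
      with hz
    set L := Real.log (u n) with hLdef
    have hfac : (1/(q-1)) / L < 0 := div_neg_of_pos_of_neg (by positivity) hL
    have hfact : 0 ≤ ((1/(q-1)) / L) * (x + y - Real.log K - z) := by
      nlinarith [hlog]
    have expand : ((1/(q-1)) * x / L + (1/(q-1)) * y / L + (1/(q-1)) * Real.log K / (-L)) -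
        (1/(q-1)) * z / L = ((1/(q-1)) / L) * (x + y - Real.log K - z) := by
      simp only [div_eq_mul_inv, inv_neg]
      ring
    linarith [hfact, expand]
  -- pass to the limit
  have hDc2 : Tendsto ((fun ε : ℝ =>
      (1/(q-1)) *
          Real.log (∑' i : ℤ, ((mconv μ ν (Metric.ball ((i : ℝ) * ε) (ε/2))).toReal) ^ q) /
        Real.log ε) ∘ u) atTop (𝓝 Dc) := hc.comp huw
  have hsum : Tendsto (fun n =>
      (((fun ε : ℝ =>
        (1/(q-1)) * Real.log (∑' i : ℤ, ((μ (Metric.ball ((i : ℝ) * ε) (ε/2))).toReal) ^ q) /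
          Real.log ε) ∘ u) n +
       ((fun ε : ℝ =>
        (1/(q-1)) * Real.log (∑' i : ℤ, ((ν (Metric.ball ((i : ℝ) * ε) (ε/2))).toReal) ^ q) /
          Real.log ε) ∘ u) n) + (g ∘ u) n) atTop (𝓝 ((Dμ + Dν) + 0)) :=
    ((hμ.comp huw).add (hν.comp huw)).add (hgtend.comp huw)
  have hfin := le_of_tendsto_of_tendsto' hDc2 hsum (fun n => key n)
  linarith [hfin]
end

section
/- Let μ and ν be nonzero finite Borel measures on ℝ with compact support and let 0 < q < 1. Define S_q(ρ, ε) = Σ_{i ∈ ℤ} ρ(B(iε, ε/2))^q. Suppose the limits D_q(μ) = lim_{ε→0⁺} (1/(q−1)) · log S_q(μ, ε) / log ε, D_q(ν) = lim_{ε→0⁺} (1/(q−1)) · log S_q(ν, ε) / log ε, and D_q(μ ∗ ν) = lim_{ε→0⁺} (1/(q−1)) · log S_q(μ ∗ ν, ε) / log ε all exist. Then D_q(μ ∗ ν) ≤ D_q(μ) + D_q(ν). (Theorem 1, case 0 < q < 1.) -/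
open MeasureTheory Topology Filter

section DqAux

/-- Real version of subadditivity of `x ↦ x ^ p` for `0 ≤ p ≤ 1`. -/
lemma real_rpow_add_le {x y p : ℝ} (hx : 0 ≤ x) (hy : 0 ≤ y) (hp : 0 ≤ p) (hp1 : p ≤ 1) :
    (x + y) ^ p ≤ x ^ p + y ^ p := by
  lift x to NNReal using hx
  lift y to NNReal using hy
  have h := NNReal.rpow_add_le_add_rpow x y hp hp1
  have := (NNReal.coe_le_coe).2 h
  push_cast at this
  simpa using this

/-- Finset version of subadditivity of `x ↦ x ^ p` for `0 < p ≤ 1`. -/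
lemma real_rpow_sum_le {ι : Type*} (s : Finset ι) (f : ι → ℝ) (hf : ∀ i ∈ s, 0 ≤ f i)
    {p : ℝ} (hp : 0 < p) (hp1 : p ≤ 1) :
    (∑ i ∈ s, f i) ^ p ≤ ∑ i ∈ s, f i ^ p := by
  classical
  induction s using Finset.cons_induction with
  | empty => simp [Real.zero_rpow hp.ne']
  | cons a s ha ih =>
    rw [Finset.sum_cons, Finset.sum_cons]
    have h1 : (f a + ∑ i ∈ s, f i) ^ p ≤ f a ^ p + (∑ i ∈ s, f i) ^ p :=
      real_rpow_add_le (hf a (Finset.mem_cons_self a s))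
        (Finset.sum_nonneg fun i hi => hf i (Finset.mem_cons_of_mem hi)) hp.le hp1
    exact h1.trans (by
      have := ih (fun i hi => hf i (Finset.mem_cons_of_mem hi))
      linarith)

/-- The complement of the topological support is null. -/
lemma msupp_compl_null' (ρ : Measure ℝ) : ρ (msupp ρ)ᶜ = 0 := by
  apply measure_null_of_locally_null
  intro x hx
  simp only [msupp, Set.mem_compl_iff, Set.mem_setOf_eq, not_forall] at hx
  obtain ⟨ε, hε, h0⟩ := hx
  refine ⟨Metric.ball x ε, ?_, ?_⟩
  · exact mem_nhdsWithin_of_mem_nhds (Metric.ball_mem_nhds x hε)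
  · simpa [not_lt, le_zero_iff] using h0

/-- The set of atoms of a finite measure is countable. -/
lemma countable_atoms' (ρ : Measure ℝ) [IsFiniteMeasure ρ] :
    {x : ℝ | ρ {x} ≠ 0}.Countable := by
  have h := Measure.countable_meas_level_set_pos (μ := ρ) (g := id) measurable_id
  apply h.mono
  intro x hx
  simp only [Set.mem_setOf_eq, id_eq] at hx ⊢
  rw [Set.setOf_eq_eq_singleton]
  exact pos_iff_ne_zero.mpr hx

/-- The set of scales ε for which some half-grid point is an atom of ρ is countable. -/
lemma countable_bad (ρ : Measure ℝ) [IsFiniteMeasure ρ] :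
    {ε : ℝ | ∃ j : ℤ, ρ {((j : ℝ) + 1/2) * ε} ≠ 0}.Countable := by
  have hsub : {ε : ℝ | ∃ j : ℤ, ρ {((j : ℝ) + 1/2) * ε} ≠ 0} ⊆
      ⋃ j : ℤ, (fun a => a / ((j : ℝ) + 1/2)) '' {x : ℝ | ρ {x} ≠ 0} := by
    rintro ε ⟨j, hj⟩
    have hne : (j : ℝ) + 1/2 ≠ 0 := by
      intro h
      have h2 : ((2 * j + 1 : ℤ) : ℝ) = 0 := by push_cast; linarith
      have h3 : (2 * j + 1 : ℤ) = 0 := by exact_mod_cast h2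
      omega
    refine Set.mem_iUnion.mpr ⟨j, ⟨((j : ℝ) + 1/2) * ε, hj, ?_⟩⟩
    rw [mul_comm]
    exact mul_div_cancel_right₀ ε hne
  exact (Set.countable_iUnion fun j => (countable_atoms' ρ).image _).mono hsub

/-- The convolution of finite measures is finite. -/
lemma mconv_isFiniteMeasure (μ ν : Measure ℝ) [IsFiniteMeasure μ] [IsFiniteMeasure ν] :
    IsFiniteMeasure (mconv μ ν) := by
  constructor
  rw [mconv, Measure.map_apply (f := fun p : ℝ × ℝ => p.1 + p.2) (measurable_fst.add measurable_snd) MeasurableSet.univ,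
    Set.preimage_univ]
  exact measure_lt_top _ _

/-- The total mass of the convolution. -/
lemma mconv_univ (μ ν : Measure ℝ) [IsFiniteMeasure μ] [IsFiniteMeasure ν] :
    mconv μ ν Set.univ = μ Set.univ * ν Set.univ := by
  rw [mconv, Measure.map_apply (f := fun p : ℝ × ℝ => p.1 + p.2) (measurable_fst.add measurable_snd) MeasurableSet.univ,
    Set.preimage_univ, ← Set.univ_prod_univ, Measure.prod_prod]

/-- Rounding to the grid of scale ε. -/
lemma round_bound {ε : ℝ} (hε0 : 0 < ε) (x : ℝ) :
    |x - ((round (x/ε) : ℤ) : ℝ) * ε| ≤ ε/2 := by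
  have h1 : |x/ε - ((round (x/ε) : ℤ) : ℝ)| ≤ 1/2 := abs_sub_round (x/ε)
  have h2 : x - ((round (x/ε) : ℤ) : ℝ) * ε = (x/ε - ((round (x/ε) : ℤ) : ℝ)) * ε := by
    field_simp
  rw [h2, abs_mul, abs_of_pos hε0]
  nlinarith

/-- Balls far from a set carrying all the mass are null. -/
lemma ball_null_outside (ρ : Measure ℝ) {R : ℝ}
    (hnull : ρ (Metric.closedBall 0 R)ᶜ = 0) {ε : ℝ} (hε0 : 0 < ε) {N : ℤ}
    (hN : R ≤ (N : ℝ) * ε) :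
    ∀ i : ℤ, i ∉ Finset.Icc (-N) N → ρ (Metric.ball ((i : ℝ) * ε) (ε/2)) = 0 := by
  intro i hi
  apply measure_mono_null _ hnull
  intro x hx
  rw [Metric.mem_ball, Real.dist_eq] at hx
  simp only [Set.mem_compl_iff, Metric.mem_closedBall, Real.dist_eq, sub_zero, not_le]
  have habs : (N : ℝ) + 1 ≤ |(i : ℝ)| := by
    rw [Finset.mem_Icc, not_and_or, not_le, not_le] at hi
    have : N + 1 ≤ |i| := by rcases hi with h | h <;> rw [abs_eq_max_neg] <;>
      [exact le_max_of_le_right (by omega); exact le_max_of_le_left (by omega)]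
    exact_mod_cast this
  have h1 : ((N : ℝ) + 1) * ε ≤ |(i : ℝ)| * ε :=
    mul_le_mul_of_nonneg_right habs hε0.le
  have h2 : |(i : ℝ) * ε| = |(i : ℝ)| * ε := by rw [abs_mul, abs_of_pos hε0]
  have h3 : |(i : ℝ) * ε| ≤ |(i : ℝ) * ε - x| + |x| := by
    have := abs_sub_abs_le_abs_sub ((i : ℝ) * ε) x
    have h4 := abs_sub_comm ((i : ℝ) * ε) x
    nlinarith [abs_nonneg ((i:ℝ)*ε - x), abs_nonneg x, abs_abs_sub_abs_le_abs_sub ((i:ℝ)*ε) x]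
  have h5 : |(i : ℝ) * ε - x| = |x - (i : ℝ) * ε| := abs_sub_comm _ _
  nlinarith

/-- The convolution vanishes far out if the factors do. -/
lemma conv_outside (μ ν : Measure ℝ) [IsFiniteMeasure μ] [IsFiniteMeasure ν] {R : ℝ}
    (hμsupp : μ (Metric.closedBall 0 R)ᶜ = 0) (hνsupp : ν (Metric.closedBall 0 R)ᶜ = 0) :
    mconv μ ν (Metric.closedBall 0 (2*R))ᶜ = 0 := by
  rw [mconv, Measure.map_apply (f := fun p : ℝ × ℝ => p.1 + p.2) (measurable_fst.add measurable_snd)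
    measurableSet_closedBall.compl]
  apply measure_mono_null (t := ((Metric.closedBall (0:ℝ) R)ᶜ ×ˢ (Set.univ : Set ℝ)) ∪
    ((Set.univ : Set ℝ) ×ˢ (Metric.closedBall (0:ℝ) R)ᶜ))
  · rintro ⟨x, y⟩ hp
    simp only [Set.mem_preimage, Set.mem_compl_iff, Metric.mem_closedBall, Real.dist_eq,
      sub_zero, not_le] at hp
    by_cases hx : |x| ≤ R
    · right
      refine ⟨trivial, ?_⟩
      simp only [Set.mem_compl_iff, Metric.mem_closedBall, Real.dist_eq, sub_zero, not_le]
      have := abs_add_le x y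
      linarith [abs_sub_abs_le_abs_sub (x + y) x, abs_abs_sub_abs_le_abs_sub (x+y) x]
    · left
      refine ⟨?_, trivial⟩
      simp only [Set.mem_compl_iff, Metric.mem_closedBall, Real.dist_eq, sub_zero, not_le]
      linarith [not_le.mp hx]
  · apply measure_union_null
    · rw [Measure.prod_prod, hμsupp, zero_mul]
    · rw [Measure.prod_prod, hνsupp, mul_zero]

/-- Positivity of the partition sum for a nonzero measure at a good scale. -/
lemma pos_S (ρ : Measure ℝ) [IsFiniteMeasure ρ] (hρ0 : ρ ≠ 0) {ε : ℝ} (hε0 : 0 < ε)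
    (hg : ∀ j : ℤ, ρ {((j : ℝ) + 1/2) * ε} = 0) {q : ℝ} (hq0 : 0 < q)
    (hsum : Summable (fun i : ℤ => ((ρ (Metric.ball ((i : ℝ) * ε) (ε/2))).toReal) ^ q)) :
    0 < ∑' i : ℤ, ((ρ (Metric.ball ((i : ℝ) * ε) (ε/2))).toReal) ^ q := by
  have hex : ∃ i : ℤ, ρ (Metric.ball ((i : ℝ) * ε) (ε/2)) ≠ 0 := by
    by_contra hall
    push_neg at hall
    have h1 : ρ (⋃ i : ℤ, Metric.ball ((i : ℝ) * ε) (ε/2)) = 0 := measure_iUnion_null hall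
    have h2 : ρ (⋃ j : ℤ, ({((j : ℝ) + 1/2) * ε} : Set ℝ)) = 0 := measure_iUnion_null hg
    have hcov : (Set.univ : Set ℝ) ⊆ (⋃ i : ℤ, Metric.ball ((i : ℝ) * ε) (ε/2)) ∪
        (⋃ j : ℤ, ({((j : ℝ) + 1/2) * ε} : Set ℝ)) := by
      intro x _
      have hj : |x - ((round (x/ε) : ℤ) : ℝ) * ε| ≤ ε/2 := round_bound hε0 x
      set j : ℤ := round (x/ε) with hjdef
      rcases eq_or_lt_of_le hj with heq | hlt
      · rcases (abs_eq (by positivity)).mp heq with h | h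
        · refine Or.inr (Set.mem_iUnion.mpr ⟨j, ?_⟩)
          simp only [Set.mem_singleton_iff]
          have : ((j : ℝ) + 1/2) * ε = (j : ℝ) * ε + ε/2 := by ring
          rw [this]; linarith
        · refine Or.inr (Set.mem_iUnion.mpr ⟨j - 1, ?_⟩)
          simp only [Set.mem_singleton_iff]
          have : (((j - 1 : ℤ) : ℝ) + 1/2) * ε = (j : ℝ) * ε - ε/2 := by push_cast; ring
          rw [this]; linarith
      · exact Or.inl (Set.mem_iUnion.mpr ⟨j, by
          rw [Metric.mem_ball, Real.dist_eq]; exact hlt⟩)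
    have : ρ Set.univ = 0 := measure_mono_null hcov (measure_union_null h1 h2)
    exact (Measure.measure_univ_ne_zero.mpr hρ0) this
  obtain ⟨i, hi⟩ := hex
  have hpos : 0 < ((ρ (Metric.ball ((i : ℝ) * ε) (ε/2))).toReal) ^ q :=
    Real.rpow_pos_of_pos (ENNReal.toReal_pos hi (measure_ne_top ρ _)) q
  exact hpos.trans_le (Summable.le_tsum hsum i fun j _ => Real.rpow_nonneg ENNReal.toReal_nonneg q)

/-- Closed grid ball bounded by open grid ball at good scales. -/
lemma closedBall_le (μ : Measure ℝ) {ε : ℝ} (hε0 : 0 < ε)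
    (hgμ : ∀ j : ℤ, μ {((j : ℝ) + 1/2) * ε} = 0) (j : ℤ) :
    μ (Metric.closedBall ((j : ℝ) * ε) (ε/2)) ≤ μ (Metric.ball ((j : ℝ) * ε) (ε/2)) := by
  have hsub : Metric.closedBall ((j : ℝ) * ε) (ε/2) ⊆ Metric.ball ((j : ℝ) * ε) (ε/2) ∪
      (({(((j - 1 : ℤ) : ℝ) + 1/2) * ε} : Set ℝ) ∪ ({((j : ℝ) + 1/2) * ε} : Set ℝ)) := by
    intro x hx
    rw [Metric.mem_closedBall, Real.dist_eq] at hx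
    rcases eq_or_lt_of_le hx with heq | hlt
    · rcases (abs_eq (le_of_lt (by positivity))).mp heq with h | h
      · refine Or.inr (Or.inr ?_)
        simp only [Set.mem_singleton_iff]
        have he : ((j : ℝ) + 1/2) * ε = (j : ℝ) * ε + ε/2 := by ring
        rw [he]; linarith
      · refine Or.inr (Or.inl ?_)
        simp only [Set.mem_singleton_iff]
        have he : (((j - 1 : ℤ) : ℝ) + 1/2) * ε = (j : ℝ) * ε - ε/2 := by push_cast; ring
        rw [he]; linarith
    · exact Or.inl (by rw [Metric.mem_ball, Real.dist_eq]; exact hlt)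
  calc μ (Metric.closedBall ((j : ℝ) * ε) (ε/2))
      ≤ μ (Metric.ball ((j : ℝ) * ε) (ε/2)) +
        μ (({(((j - 1 : ℤ) : ℝ) + 1/2) * ε} : Set ℝ) ∪ ({((j : ℝ) + 1/2) * ε} : Set ℝ)) :=
        (measure_mono hsub).trans (measure_union_le _ _)
    _ = μ (Metric.ball ((j : ℝ) * ε) (ε/2)) := by
        rw [measure_union_null (hgμ (j - 1)) (hgμ j), add_zero]

/-- Double-radius grid ball bounded by three neighbouring grid balls at good scales. -/
lemma bigBall_le (ν : Measure ℝ) {ε : ℝ} (hε0 : 0 < ε)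
    (hgν : ∀ j : ℤ, ν {((j : ℝ) + 1/2) * ε} = 0) (k : ℤ) :
    ν (Metric.ball ((k : ℝ) * ε) ε) ≤
      ν (Metric.ball (((k - 1 : ℤ) : ℝ) * ε) (ε/2)) + ν (Metric.ball ((k : ℝ) * ε) (ε/2)) +
        ν (Metric.ball (((k + 1 : ℤ) : ℝ) * ε) (ε/2)) := by
  have hsub : Metric.ball ((k : ℝ) * ε) ε ⊆
      ((Metric.ball (((k - 1 : ℤ) : ℝ) * ε) (ε/2) ∪ Metric.ball ((k : ℝ) * ε) (ε/2)) ∪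
        Metric.ball (((k + 1 : ℤ) : ℝ) * ε) (ε/2)) ∪
      (({(((k - 1 : ℤ) : ℝ) + 1/2) * ε} : Set ℝ) ∪ ({((k : ℝ) + 1/2) * ε} : Set ℝ)) := by
    intro x hx
    rw [Metric.mem_ball, Real.dist_eq, abs_lt] at hx
    rcases lt_trichotomy x ((k : ℝ) * ε - ε/2) with h1 | h1 | h1
    · refine Or.inl (Or.inl (Or.inl ?_))
      rw [Metric.mem_ball, Real.dist_eq, abs_lt]
      push_cast
      constructor <;> nlinarith [hx.1, hx.2]
    · refine Or.inr (Or.inl ?_)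
      simp only [Set.mem_singleton_iff]
      have he : (((k - 1 : ℤ) : ℝ) + 1/2) * ε = (k : ℝ) * ε - ε/2 := by push_cast; ring
      rw [he]; linarith
    · rcases lt_trichotomy x ((k : ℝ) * ε + ε/2) with h2 | h2 | h2
      · refine Or.inl (Or.inl (Or.inr ?_))
        rw [Metric.mem_ball, Real.dist_eq, abs_lt]
        constructor <;> linarith
      · refine Or.inr (Or.inr ?_)
        simp only [Set.mem_singleton_iff]
        have he : ((k : ℝ) + 1/2) * ε = (k : ℝ) * ε + ε/2 := by ring
        rw [he]; linarith
      · refine Or.inl (Or.inr ?_)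
        rw [Metric.mem_ball, Real.dist_eq, abs_lt]
        push_cast
        constructor <;> nlinarith [hx.1, hx.2]
  calc ν (Metric.ball ((k : ℝ) * ε) ε)
      ≤ ν ((Metric.ball (((k - 1 : ℤ) : ℝ) * ε) (ε/2) ∪ Metric.ball ((k : ℝ) * ε) (ε/2)) ∪
          Metric.ball (((k + 1 : ℤ) : ℝ) * ε) (ε/2)) +
        ν (({(((k - 1 : ℤ) : ℝ) + 1/2) * ε} : Set ℝ) ∪ ({((k : ℝ) + 1/2) * ε} : Set ℝ)) :=
        (measure_mono hsub).trans (measure_union_le _ _)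
    _ = ν ((Metric.ball (((k - 1 : ℤ) : ℝ) * ε) (ε/2) ∪ Metric.ball ((k : ℝ) * ε) (ε/2)) ∪
          Metric.ball (((k + 1 : ℤ) : ℝ) * ε) (ε/2)) := by
        rw [measure_union_null (hgν (k - 1)) (hgν k), add_zero]
    _ ≤ (ν (Metric.ball (((k - 1 : ℤ) : ℝ) * ε) (ε/2)) + ν (Metric.ball ((k : ℝ) * ε) (ε/2))) +
          ν (Metric.ball (((k + 1 : ℤ) : ℝ) * ε) (ε/2)) :=
        (measure_union_le _ _).trans (add_le_add (measure_union_le _ _) le_rfl)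

/-- Key covering estimate for the convolution at good scales. -/
lemma conv_bound (μ ν : Measure ℝ) [IsFiniteMeasure μ] [IsFiniteMeasure ν]
    {R ε : ℝ} (hε0 : 0 < ε) (hμsupp : μ (Metric.closedBall 0 R)ᶜ = 0)
    (hgμ : ∀ j : ℤ, μ {((j : ℝ) + 1/2) * ε} = 0)
    (hgν : ∀ j : ℤ, ν {((j : ℝ) + 1/2) * ε} = 0)
    {N : ℤ} (hN : R/ε + 1/2 ≤ (N : ℝ)) (i : ℤ) :
    mconv μ ν (Metric.ball ((i : ℝ) * ε) (ε/2)) ≤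
      ∑ j ∈ Finset.Icc (-N) N, μ (Metric.ball ((j : ℝ) * ε) (ε/2)) *
        (ν (Metric.ball (((i - j - 1 : ℤ) : ℝ) * ε) (ε/2)) +
          ν (Metric.ball (((i - j : ℤ) : ℝ) * ε) (ε/2)) +
          ν (Metric.ball (((i - j + 1 : ℤ) : ℝ) * ε) (ε/2))) := by
  have madd : Measurable (fun p : ℝ × ℝ => p.1 + p.2) := measurable_fst.add measurable_snd
  rw [mconv, Measure.map_apply madd Metric.isOpen_ball.measurableSet]
  set T : Set (ℝ × ℝ) := (fun p : ℝ × ℝ => p.1 + p.2) ⁻¹' Metric.ball ((i : ℝ) * ε) (ε/2)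
    with hTdef
  have hsplit : T ⊆ (T ∩ (Metric.closedBall (0:ℝ) R ×ˢ (Set.univ : Set ℝ))) ∪
      ((Metric.closedBall (0:ℝ) R)ᶜ ×ˢ (Set.univ : Set ℝ)) := by
    intro p hp
    by_cases h : p.1 ∈ Metric.closedBall (0:ℝ) R
    · exact Or.inl ⟨hp, h, trivial⟩
    · exact Or.inr ⟨h, trivial⟩
  have hnull2 : (μ.prod ν) ((Metric.closedBall (0:ℝ) R)ᶜ ×ˢ (Set.univ : Set ℝ)) = 0 := by
    rw [Measure.prod_prod, hμsupp, zero_mul]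
  have hcover : T ∩ (Metric.closedBall (0:ℝ) R ×ˢ (Set.univ : Set ℝ)) ⊆
      ⋃ j ∈ Finset.Icc (-N) N,
        (Metric.closedBall ((j : ℝ) * ε) (ε/2)) ×ˢ (Metric.ball (((i - j : ℤ) : ℝ) * ε) ε) := by
    rintro ⟨x, y⟩ ⟨hxy, hx, -⟩
    have hxy' : |x + y - (i : ℝ) * ε| < ε/2 := by
      rw [hTdef, Set.mem_preimage, Metric.mem_ball, Real.dist_eq] at hxy
      exact hxy
    have hxR : |x| ≤ R := by
      rw [Metric.mem_closedBall, Real.dist_eq, sub_zero] at hx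
      exact hx
    have hj : |x - ((round (x/ε) : ℤ) : ℝ) * ε| ≤ ε/2 := round_bound hε0 x
    set j : ℤ := round (x/ε) with hjdef
    have hjN : j ∈ Finset.Icc (-N) N := by
      rw [Finset.mem_Icc]
      have h1 : |x/ε - (j : ℝ)| ≤ 1/2 := abs_sub_round (x/ε)
      have h2 : |x/ε| ≤ R/ε := by
        rw [abs_div, abs_of_pos hε0]
        gcongr
      have h3 : |(j : ℝ)| ≤ R/ε + 1/2 := by
        have h4 := abs_abs_sub_abs_le_abs_sub (x/ε) ((j : ℝ))
        have h5 := (abs_le.mp (h4.trans h1)).1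
        linarith
      have h5 : |(j : ℝ)| ≤ (N : ℝ) := h3.trans hN
      have h6 : |j| ≤ N := by exact_mod_cast h5
      exact abs_le.mp h6
    refine Set.mem_biUnion hjN ⟨?_, ?_⟩
    · rw [Metric.mem_closedBall, Real.dist_eq]
      exact hj
    · rw [Metric.mem_ball, Real.dist_eq]
      have he : y - ((i - j : ℤ) : ℝ) * ε = (x + y - (i : ℝ) * ε) - (x - (j : ℝ) * ε) := by
        push_cast; ring
      rw [he]
      calc |(x + y - (i : ℝ) * ε) - (x - (j : ℝ) * ε)|
          ≤ |x + y - (i : ℝ) * ε| + |x - (j : ℝ) * ε| := abs_sub _ _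
        _ < ε := by linarith
  calc (μ.prod ν) T
      ≤ (μ.prod ν) (T ∩ (Metric.closedBall (0:ℝ) R ×ˢ (Set.univ : Set ℝ))) +
        (μ.prod ν) ((Metric.closedBall (0:ℝ) R)ᶜ ×ˢ (Set.univ : Set ℝ)) :=
        (measure_mono hsplit).trans (measure_union_le _ _)
    _ = (μ.prod ν) (T ∩ (Metric.closedBall (0:ℝ) R ×ˢ (Set.univ : Set ℝ))) := by
        rw [hnull2, add_zero]
    _ ≤ (μ.prod ν) (⋃ j ∈ Finset.Icc (-N) N,
          (Metric.closedBall ((j : ℝ) * ε) (ε/2)) ×ˢ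
            (Metric.ball (((i - j : ℤ) : ℝ) * ε) ε)) := measure_mono hcover
    _ ≤ ∑ j ∈ Finset.Icc (-N) N, (μ.prod ν)
          ((Metric.closedBall ((j : ℝ) * ε) (ε/2)) ×ˢ
            (Metric.ball (((i - j : ℤ) : ℝ) * ε) ε)) := measure_biUnion_finset_le _ _
    _ = ∑ j ∈ Finset.Icc (-N) N, μ (Metric.closedBall ((j : ℝ) * ε) (ε/2)) *
          ν (Metric.ball (((i - j : ℤ) : ℝ) * ε) ε) := by
        refine Finset.sum_congr rfl fun j _ => ?_
        rw [Measure.prod_prod]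
    _ ≤ ∑ j ∈ Finset.Icc (-N) N, μ (Metric.ball ((j : ℝ) * ε) (ε/2)) *
          (ν (Metric.ball (((i - j - 1 : ℤ) : ℝ) * ε) (ε/2)) +
            ν (Metric.ball (((i - j : ℤ) : ℝ) * ε) (ε/2)) +
            ν (Metric.ball (((i - j + 1 : ℤ) : ℝ) * ε) (ε/2))) := by
        refine Finset.sum_le_sum fun j _ => ?_
        exact mul_le_mul' (closedBall_le μ hε0 hgμ j) (bigBall_le ν hε0 hgν (i - j))

/-- Purely arithmetic part: from the pointwise covering bound deduce the bound on
partition sums with exponent `q ∈ (0,1)`. -/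
lemma arith_bound {a b c : ℤ → ℝ} {q : ℝ} (hq0 : 0 < q) (hq1 : q < 1)
    (ha0 : ∀ j, 0 ≤ a j) (hb0 : ∀ j, 0 ≤ b j) (hc0 : ∀ j, 0 ≤ c j)
    (I J : Finset ℤ)
    (hcI : ∀ i ∉ I, c i = 0)
    (hbound : ∀ i, c i ≤ ∑ j ∈ J, a j * (b (i - j - 1) + b (i - j) + b (i - j + 1)))
    (hsa : Summable (fun j => a j ^ q)) (hsb : Summable (fun j => b j ^ q)) :
    ∑' i, c i ^ q ≤ 3 * (∑' j, a j ^ q) * (∑' j, b j ^ q) := by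
  classical
  have hct : ∑' i, c i ^ q = ∑ i ∈ I, c i ^ q :=
    tsum_eq_sum (fun i hi => by rw [hcI i hi, Real.zero_rpow hq0.ne'])
  rw [hct]
  have hSb0 : 0 ≤ ∑' j, b j ^ q := tsum_nonneg fun j => Real.rpow_nonneg (hb0 j) q
  have hshift : ∀ g : ℤ → ℤ, Function.Injective g →
      ∑ i ∈ I, b (g i) ^ q ≤ ∑' j, b j ^ q := by
    intro g hg
    have he : ∑ i ∈ I, b (g i) ^ q = ∑ k ∈ I.image g, b k ^ q :=
      (Finset.sum_image (f := fun k => b k ^ q) fun x _ y _ h => hg h).symm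
    rw [he]
    exact hsb.sum_le_tsum _ (fun k _ => Real.rpow_nonneg (hb0 k) q)
  have step : ∀ i ∈ I, c i ^ q ≤
      ∑ j ∈ J, a j ^ q * (b (i - j - 1) ^ q + b (i - j) ^ q + b (i - j + 1) ^ q) := by
    intro i _
    have h1 : c i ^ q ≤ (∑ j ∈ J, a j * (b (i - j - 1) + b (i - j) + b (i - j + 1))) ^ q :=
      Real.rpow_le_rpow (hc0 i) (hbound i) hq0.le
    have h2 : (∑ j ∈ J, a j * (b (i - j - 1) + b (i - j) + b (i - j + 1))) ^ q ≤
        ∑ j ∈ J, (a j * (b (i - j - 1) + b (i - j) + b (i - j + 1))) ^ q :=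
      real_rpow_sum_le J _ (fun j _ => mul_nonneg (ha0 j)
        (add_nonneg (add_nonneg (hb0 _) (hb0 _)) (hb0 _))) hq0 hq1.le
    have h3 : ∀ j ∈ J, (a j * (b (i - j - 1) + b (i - j) + b (i - j + 1))) ^ q ≤
        a j ^ q * (b (i - j - 1) ^ q + b (i - j) ^ q + b (i - j + 1) ^ q) := by
      intro j _
      rw [Real.mul_rpow (ha0 j) (add_nonneg (add_nonneg (hb0 _) (hb0 _)) (hb0 _))]
      have t2 : (b (i - j - 1) + b (i - j)) ^ q ≤ b (i - j - 1) ^ q + b (i - j) ^ q :=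
        real_rpow_add_le (hb0 _) (hb0 _) hq0.le hq1.le
      have t1 : (b (i - j - 1) + b (i - j) + b (i - j + 1)) ^ q ≤
          (b (i - j - 1) + b (i - j)) ^ q + b (i - j + 1) ^ q :=
        real_rpow_add_le (add_nonneg (hb0 _) (hb0 _)) (hb0 _) hq0.le hq1.le
      have t3 : (b (i - j - 1) + b (i - j) + b (i - j + 1)) ^ q ≤
          b (i - j - 1) ^ q + b (i - j) ^ q + b (i - j + 1) ^ q := by linarith
      exact mul_le_mul_of_nonneg_left t3 (Real.rpow_nonneg (ha0 j) q)
    exact h1.trans (h2.trans (Finset.sum_le_sum h3))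
  calc ∑ i ∈ I, c i ^ q
      ≤ ∑ i ∈ I, ∑ j ∈ J, a j ^ q *
          (b (i - j - 1) ^ q + b (i - j) ^ q + b (i - j + 1) ^ q) := Finset.sum_le_sum step
    _ = ∑ j ∈ J, ∑ i ∈ I, a j ^ q *
          (b (i - j - 1) ^ q + b (i - j) ^ q + b (i - j + 1) ^ q) := Finset.sum_comm
    _ = ∑ j ∈ J, a j ^ q * ∑ i ∈ I,
          (b (i - j - 1) ^ q + b (i - j) ^ q + b (i - j + 1) ^ q) := by
        simp [Finset.mul_sum]
    _ ≤ ∑ j ∈ J, a j ^ q * (3 * ∑' k, b k ^ q) := by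
        refine Finset.sum_le_sum fun j _ => ?_
        refine mul_le_mul_of_nonneg_left ?_ (Real.rpow_nonneg (ha0 j) q)
        have e : ∑ i ∈ I, (b (i - j - 1) ^ q + b (i - j) ^ q + b (i - j + 1) ^ q) =
            (∑ i ∈ I, b (i - j - 1) ^ q) + (∑ i ∈ I, b (i - j) ^ q) +
              (∑ i ∈ I, b (i - j + 1) ^ q) := by
          rw [Finset.sum_add_distrib, Finset.sum_add_distrib]
        rw [e]
        have k1 := hshift (fun i => i - j - 1) (fun x y h => by dsimp only at h; omega)
        have k2 := hshift (fun i => i - j) (fun x y h => by dsimp only at h; omega)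
        have k3 := hshift (fun i => i - j + 1) (fun x y h => by dsimp only at h; omega)
        linarith
    _ = 3 * (∑' k, b k ^ q) * ∑ j ∈ J, a j ^ q := by
        rw [← Finset.sum_mul]
        ring
    _ ≤ 3 * (∑' k, b k ^ q) * ∑' j, a j ^ q := by
        refine mul_le_mul_of_nonneg_left
          (hsa.sum_le_tsum J (fun k _ => Real.rpow_nonneg (ha0 k) q)) (by positivity)
    _ = 3 * (∑' j, a j ^ q) * (∑' j, b j ^ q) := by ring

/-- The key quantitative estimate at a single good scale. -/
lemma key_estimate (μ ν : Measure ℝ) [IsFiniteMeasure μ] [IsFiniteMeasure ν]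
    (hμ0 : μ ≠ 0) (hν0 : ν ≠ 0)
    (hμc : IsCompact (msupp μ)) (hνc : IsCompact (msupp ν))
    {q : ℝ} (hq0 : 0 < q) (hq1 : q < 1) {ε : ℝ} (hε0 : 0 < ε)
    (hgμ : ∀ j : ℤ, μ {((j : ℝ) + 1/2) * ε} = 0)
    (hgν : ∀ j : ℤ, ν {((j : ℝ) + 1/2) * ε} = 0)
    (hgc : ∀ j : ℤ, mconv μ ν {((j : ℝ) + 1/2) * ε} = 0) :
    0 < (∑' i : ℤ, ((μ (Metric.ball ((i : ℝ) * ε) (ε/2))).toReal) ^ q) ∧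
    0 < (∑' i : ℤ, ((ν (Metric.ball ((i : ℝ) * ε) (ε/2))).toReal) ^ q) ∧
    0 < (∑' i : ℤ, ((mconv μ ν (Metric.ball ((i : ℝ) * ε) (ε/2))).toReal) ^ q) ∧
    (∑' i : ℤ, ((mconv μ ν (Metric.ball ((i : ℝ) * ε) (ε/2))).toReal) ^ q) ≤
      3 * (∑' i : ℤ, ((μ (Metric.ball ((i : ℝ) * ε) (ε/2))).toReal) ^ q) *
        (∑' i : ℤ, ((ν (Metric.ball ((i : ℝ) * ε) (ε/2))).toReal) ^ q) := by
  classical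
  haveI : IsFiniteMeasure (mconv μ ν) := mconv_isFiniteMeasure μ ν
  obtain ⟨Rμ, hRμ⟩ := hμc.isBounded.subset_closedBall 0
  obtain ⟨Rν, hRν⟩ := hνc.isBounded.subset_closedBall 0
  set R : ℝ := |Rμ| + |Rν| + 1 with hRdef
  have hR0 : 0 < R := by positivity
  have hμR : msupp μ ⊆ Metric.closedBall 0 R :=
    hRμ.trans (Metric.closedBall_subset_closedBall
      (le_trans (le_abs_self _) (by rw [hRdef]; linarith [abs_nonneg Rν])))
  have hνR : msupp ν ⊆ Metric.closedBall 0 R :=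
    hRν.trans (Metric.closedBall_subset_closedBall
      (le_trans (le_abs_self _) (by rw [hRdef]; linarith [abs_nonneg Rμ])))
  have hμsupp : μ (Metric.closedBall 0 R)ᶜ = 0 :=
    measure_mono_null (Set.compl_subset_compl.mpr hμR) (msupp_compl_null' μ)
  have hνsupp : ν (Metric.closedBall 0 R)ᶜ = 0 :=
    measure_mono_null (Set.compl_subset_compl.mpr hνR) (msupp_compl_null' ν)
  have hconvsupp := conv_outside μ ν hμsupp hνsupp
  set N : ℤ := ⌈R/ε⌉ + 1 with hNdef
  set M : ℤ := ⌈2*R/ε⌉ + 1 with hMdef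
  have hceil : R/ε ≤ (⌈R/ε⌉ : ℝ) := Int.le_ceil _
  have hN : R/ε + 1/2 ≤ (N : ℝ) := by rw [hNdef]; push_cast; linarith
  have hNR : R ≤ (N : ℝ) * ε := by
    have h : R/ε ≤ (N : ℝ) := by rw [hNdef]; push_cast; linarith
    calc R = R/ε * ε := by field_simp
      _ ≤ (N : ℝ) * ε := mul_le_mul_of_nonneg_right h hε0.le
  have hceil2 : 2*R/ε ≤ (⌈2*R/ε⌉ : ℝ) := Int.le_ceil _
  have hMR : 2*R ≤ (M : ℝ) * ε := by
    have h : 2*R/ε ≤ (M : ℝ) := by rw [hMdef]; push_cast; linarith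
    calc 2*R = 2*R/ε * ε := by field_simp
      _ ≤ (M : ℝ) * ε := mul_le_mul_of_nonneg_right h hε0.le
  have hA0 := ball_null_outside μ hμsupp hε0 hNR
  have hB0 := ball_null_outside ν hνsupp hε0 hNR
  have hC0 := ball_null_outside (mconv μ ν) hconvsupp hε0 hMR
  have hsa : Summable (fun i : ℤ => ((μ (Metric.ball ((i : ℝ) * ε) (ε/2))).toReal) ^ q) :=
    summable_of_ne_finset_zero (s := Finset.Icc (-N) N)
      (fun i hi => by rw [hA0 i hi]; simp [Real.zero_rpow hq0.ne'])
  have hsb : Summable (fun i : ℤ => ((ν (Metric.ball ((i : ℝ) * ε) (ε/2))).toReal) ^ q) :=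
    summable_of_ne_finset_zero (s := Finset.Icc (-N) N)
      (fun i hi => by rw [hB0 i hi]; simp [Real.zero_rpow hq0.ne'])
  have hsc : Summable (fun i : ℤ =>
      ((mconv μ ν (Metric.ball ((i : ℝ) * ε) (ε/2))).toReal) ^ q) :=
    summable_of_ne_finset_zero (s := Finset.Icc (-M) M)
      (fun i hi => by rw [hC0 i hi]; simp [Real.zero_rpow hq0.ne'])
  have hc0 : mconv μ ν ≠ 0 := by
    have h : mconv μ ν Set.univ ≠ 0 := by
      rw [mconv_univ]
      exact mul_ne_zero (Measure.measure_univ_ne_zero.mpr hμ0)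
        (Measure.measure_univ_ne_zero.mpr hν0)
    exact Measure.measure_univ_ne_zero.mp h
  refine ⟨pos_S μ hμ0 hε0 hgμ hq0 hsa, pos_S ν hν0 hε0 hgν hq0 hsb,
    pos_S (mconv μ ν) hc0 hε0 hgc hq0 hsc, ?_⟩
  have hbound : ∀ i : ℤ, ((mconv μ ν (Metric.ball ((i : ℝ) * ε) (ε/2))).toReal) ≤
      ∑ j ∈ Finset.Icc (-N) N, ((μ (Metric.ball ((j : ℝ) * ε) (ε/2))).toReal) *
        (((ν (Metric.ball (((i - j - 1 : ℤ) : ℝ) * ε) (ε/2))).toReal) +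
         ((ν (Metric.ball (((i - j : ℤ) : ℝ) * ε) (ε/2))).toReal) +
         ((ν (Metric.ball (((i - j + 1 : ℤ) : ℝ) * ε) (ε/2))).toReal)) := by
    intro i
    have h := conv_bound μ ν hε0 hμsupp hgμ hgν hN i
    have hfin : ∀ j ∈ Finset.Icc (-N) N,
        μ (Metric.ball ((j : ℝ) * ε) (ε/2)) *
          (ν (Metric.ball (((i - j - 1 : ℤ) : ℝ) * ε) (ε/2)) +
           ν (Metric.ball (((i - j : ℤ) : ℝ) * ε) (ε/2)) +
           ν (Metric.ball (((i - j + 1 : ℤ) : ℝ) * ε) (ε/2))) ≠ ⊤ := by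
      intro j _
      exact ENNReal.mul_ne_top (measure_ne_top μ _)
        (ENNReal.add_ne_top.mpr ⟨ENNReal.add_ne_top.mpr
          ⟨measure_ne_top ν _, measure_ne_top ν _⟩, measure_ne_top ν _⟩)
    calc ((mconv μ ν (Metric.ball ((i : ℝ) * ε) (ε/2))).toReal)
        ≤ (∑ j ∈ Finset.Icc (-N) N, μ (Metric.ball ((j : ℝ) * ε) (ε/2)) *
            (ν (Metric.ball (((i - j - 1 : ℤ) : ℝ) * ε) (ε/2)) +
             ν (Metric.ball (((i - j : ℤ) : ℝ) * ε) (ε/2)) +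
             ν (Metric.ball (((i - j + 1 : ℤ) : ℝ) * ε) (ε/2)))).toReal :=
          ENNReal.toReal_mono (ENNReal.sum_ne_top.mpr hfin) h
      _ = ∑ j ∈ Finset.Icc (-N) N, (μ (Metric.ball ((j : ℝ) * ε) (ε/2)) *
            (ν (Metric.ball (((i - j - 1 : ℤ) : ℝ) * ε) (ε/2)) +
             ν (Metric.ball (((i - j : ℤ) : ℝ) * ε) (ε/2)) +
             ν (Metric.ball (((i - j + 1 : ℤ) : ℝ) * ε) (ε/2)))).toReal :=
          ENNReal.toReal_sum hfin
      _ = ∑ j ∈ Finset.Icc (-N) N, ((μ (Metric.ball ((j : ℝ) * ε) (ε/2))).toReal) *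
            (((ν (Metric.ball (((i - j - 1 : ℤ) : ℝ) * ε) (ε/2))).toReal) +
             ((ν (Metric.ball (((i - j : ℤ) : ℝ) * ε) (ε/2))).toReal) +
             ((ν (Metric.ball (((i - j + 1 : ℤ) : ℝ) * ε) (ε/2))).toReal)) := by
          refine Finset.sum_congr rfl fun j _ => ?_
          rw [ENNReal.toReal_mul,
            ENNReal.toReal_add (ENNReal.add_ne_top.mpr
              ⟨measure_ne_top ν _, measure_ne_top ν _⟩) (measure_ne_top ν _),
            ENNReal.toReal_add (measure_ne_top ν _) (measure_ne_top ν _)]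
  exact arith_bound hq0 hq1 (fun j => ENNReal.toReal_nonneg) (fun j => ENNReal.toReal_nonneg)
    (fun j => ENNReal.toReal_nonneg) (Finset.Icc (-M) M) (Finset.Icc (-N) N)
    (fun i hi => by rw [hC0 i hi]; simp) hbound hsa hsb

end DqAux

/-- Theorem 1, case 0 < q < 1: the generalized box dimension of the convolution is bounded
from above by the sum of the generalized box dimensions of the factors. -/
theorem Dq_convolution_le_of_lt_one
    (μ ν : Measure ℝ) [IsFiniteMeasure μ] [IsFiniteMeasure ν]
    (hμ0 : μ ≠ 0) (hν0 : ν ≠ 0)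
    (hμc : IsCompact (msupp μ)) (hνc : IsCompact (msupp ν))
    (q Dμ Dν Dc : ℝ) (hq0 : 0 < q) (hq1 : q < 1)
    (hμ : Tendsto (fun ε : ℝ =>
        (1/(q-1)) * Real.log (∑' i : ℤ, ((μ (Metric.ball ((i : ℝ) * ε) (ε/2))).toReal) ^ q) /
          Real.log ε) (𝓝[>] 0) (𝓝 Dμ))
    (hν : Tendsto (fun ε : ℝ =>
        (1/(q-1)) * Real.log (∑' i : ℤ, ((ν (Metric.ball ((i : ℝ) * ε) (ε/2))).toReal) ^ q) /
          Real.log ε) (𝓝[>] 0) (𝓝 Dν))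
    (hc : Tendsto (fun ε : ℝ =>
        (1/(q-1)) *
            Real.log (∑' i : ℤ, ((mconv μ ν (Metric.ball ((i : ℝ) * ε) (ε/2))).toReal) ^ q) /
          Real.log ε) (𝓝[>] 0) (𝓝 Dc)) :
    Dc ≤ Dμ + Dν := by
  classical
  haveI : IsFiniteMeasure (mconv μ ν) := mconv_isFiniteMeasure μ ν
  have herr : Tendsto (fun ε : ℝ => (1/(q-1)) * Real.log 3 / Real.log ε)
      (𝓝[>] (0:ℝ)) (𝓝 0) := by
    have h1 : Tendsto (fun ε : ℝ => -Real.log ε) (𝓝[>] (0:ℝ)) atTop :=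
      tendsto_neg_atBot_atTop.comp Real.tendsto_log_nhdsGT_zero
    have h2 : Tendsto (fun ε : ℝ => (-Real.log ε)⁻¹) (𝓝[>] (0:ℝ)) (𝓝 0) :=
      h1.inv_tendsto_atTop
    have h4 := h2.neg.const_mul ((1/(q-1)) * Real.log 3)
    simp only [neg_zero, mul_zero] at h4
    refine h4.congr fun ε => ?_
    rw [inv_neg, neg_neg]
    ring
  have hlim := ((hc.sub hμ).sub hν).sub herr
  by_contra hcon
  push_neg at hcon
  have hpos0 : (0:ℝ) < Dc - Dμ - Dν - 0 := by linarith
  have hev := Filter.Tendsto.eventually_const_lt hpos0 hlim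
  have hfreq : ∃ᶠ ε in 𝓝[>] (0:ℝ),
      (1/(q-1)) * Real.log (∑' i : ℤ,
          ((mconv μ ν (Metric.ball ((i : ℝ) * ε) (ε/2))).toReal) ^ q) / Real.log ε -
        (1/(q-1)) * Real.log (∑' i : ℤ,
          ((μ (Metric.ball ((i : ℝ) * ε) (ε/2))).toReal) ^ q) / Real.log ε -
        (1/(q-1)) * Real.log (∑' i : ℤ,
          ((ν (Metric.ball ((i : ℝ) * ε) (ε/2))).toReal) ^ q) / Real.log ε -
        (1/(q-1)) * Real.log 3 / Real.log ε ≤ 0 := by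
    rw [frequently_iff]
    intro U hU
    rw [mem_nhdsGT_iff_exists_Ioo_subset] at hU
    obtain ⟨δ, hδ, hUsub⟩ := hU
    have hδ0 : (0:ℝ) < δ := hδ
    have hδ'0 : (0:ℝ) < min δ 1 := lt_min hδ0 one_pos
    have hBadc : ({ε : ℝ | ∃ j : ℤ, μ {((j : ℝ) + 1/2) * ε} ≠ 0} ∪
        ({ε : ℝ | ∃ j : ℤ, ν {((j : ℝ) + 1/2) * ε} ≠ 0} ∪
          {ε : ℝ | ∃ j : ℤ, mconv μ ν {((j : ℝ) + 1/2) * ε} ≠ 0})).Countable :=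
      (countable_bad μ).union ((countable_bad ν).union (countable_bad (mconv μ ν)))
    have hnot : ¬ (Set.Ioo (0:ℝ) (min δ 1) ⊆
        ({ε : ℝ | ∃ j : ℤ, μ {((j : ℝ) + 1/2) * ε} ≠ 0} ∪
          ({ε : ℝ | ∃ j : ℤ, ν {((j : ℝ) + 1/2) * ε} ≠ 0} ∪
            {ε : ℝ | ∃ j : ℤ, mconv μ ν {((j : ℝ) + 1/2) * ε} ≠ 0}))) := by
      intro hss
      have h0 : volume (Set.Ioo (0:ℝ) (min δ 1)) = 0 :=
        measure_mono_null hss (hBadc.measure_zero _)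
      rw [Real.volume_Ioo, ENNReal.ofReal_eq_zero] at h0
      linarith
    obtain ⟨ε, hεI, hεB⟩ := Set.not_subset.mp hnot
    have hε0 : 0 < ε := hεI.1
    have hε1 : ε < 1 := lt_of_lt_of_le hεI.2 (min_le_right _ _)
    refine ⟨ε, hUsub ⟨hε0, lt_of_lt_of_le hεI.2 (min_le_left _ _)⟩, ?_⟩
    simp only [Set.mem_union, Set.mem_setOf_eq, not_or, not_exists, ne_eq, not_not] at hεB
    obtain ⟨hgμ, hgν, hgc⟩ := hεB
    obtain ⟨hSμ, hSν, hSc, hle⟩ := key_estimate μ ν hμ0 hν0 hμc hνc hq0 hq1 hε0 hgμ hgν hgc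
    set Sμ : ℝ := ∑' i : ℤ, ((μ (Metric.ball ((i : ℝ) * ε) (ε/2))).toReal) ^ q with hSμdef
    set Sν : ℝ := ∑' i : ℤ, ((ν (Metric.ball ((i : ℝ) * ε) (ε/2))).toReal) ^ q with hSνdef
    set Sc : ℝ := ∑' i : ℤ,
      ((mconv μ ν (Metric.ball ((i : ℝ) * ε) (ε/2))).toReal) ^ q with hScdef
    have hlog : Real.log Sc ≤ Real.log 3 + Real.log Sμ + Real.log Sν := by
      calc Real.log Sc ≤ Real.log (3 * Sμ * Sν) := Real.log_le_log hSc hle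
        _ = Real.log 3 + Real.log Sμ + Real.log Sν := by
          rw [Real.log_mul (by positivity) hSν.ne', Real.log_mul (by norm_num) hSμ.ne']
    have hL : Real.log ε < 0 := Real.log_neg hε0 hε1
    have hu : 1/(q-1) < 0 := div_neg_of_pos_of_neg one_pos (by linarith)
    have ht : 0 < (1/(q-1)) / Real.log ε := div_pos_of_neg_of_neg hu hL
    have key := mul_le_mul_of_nonneg_left hlog ht.le
    have e : ∀ X : ℝ, (1/(q-1)) * X / Real.log ε = ((1/(q-1)) / Real.log ε) * X :=
      fun X => by ring
    rw [e, e, e, e]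
    have key2 : ((1/(q-1)) / Real.log ε) * (Real.log 3 + Real.log Sμ + Real.log Sν) =
        ((1/(q-1)) / Real.log ε) * Real.log 3 + ((1/(q-1)) / Real.log ε) * Real.log Sμ +
          ((1/(q-1)) / Real.log ε) * Real.log Sν := by ring
    rw [key2] at key
    linarith
  obtain ⟨ε, hP, hQ⟩ := (hfreq.and_eventually hev).exists
  have hQ' : (0:ℝ) <
      (1/(q-1)) * Real.log (∑' i : ℤ,
          ((mconv μ ν (Metric.ball ((i : ℝ) * ε) (ε/2))).toReal) ^ q) / Real.log ε -
        (1/(q-1)) * Real.log (∑' i : ℤ,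
          ((μ (Metric.ball ((i : ℝ) * ε) (ε/2))).toReal) ^ q) / Real.log ε -
        (1/(q-1)) * Real.log (∑' i : ℤ,
          ((ν (Metric.ball ((i : ℝ) * ε) (ε/2))).toReal) ^ q) / Real.log ε -
        (1/(q-1)) * Real.log 3 / Real.log ε := hQ
  linarith
end
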